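/- arXiv:1009.0683 — 4 statements merged into one kernel-verified Lean document; each statement's English description precedes it below -/
import Mathlib

section
/- For all s, x, y ∈ ℝ, the extended kernel satisfies ((x∂x − ∂x³) − (y∂y − ∂y³))K̃_s(x,y) = (x−y)·∫₀^∞ z·e^{−2sz}·K(x+z, y+z) dz, i.e. x·∂xK̃_s(x,y) − ∂x³K̃_s(x,y) − y·∂yK̃_s(x,y) + ∂y³K̃_s(x,y) equals the right-hand side, where ∂x and ∂y denote partial differentiation in the first and second argument respectively. -/
open MeasureTheory Real Filter Set

def AiryDecay (f : ℝ → ℝ) : Prop :=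
  Continuous f ∧ ∀ c a : ℝ, ∃ C : ℝ, 0 ≤ C ∧ ∀ u, a ≤ u → |f u| ≤ C * Real.exp (-(c * u))

lemma airy_bdd_on_Ici {g : ℝ → ℝ} (hg : Continuous g) (h0 : Tendsto g atTop (nhds 0))
    (a : ℝ) : ∃ C : ℝ, 0 ≤ C ∧ ∀ u, a ≤ u → |g u| ≤ C := by
  obtain ⟨N, hN⟩ := Metric.tendsto_atTop.mp h0 1 one_pos
  obtain ⟨C, hC⟩ := (isCompact_Icc (a := a) (b := N)).exists_bound_of_continuousOn
    hg.continuousOn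
  refine ⟨max C 1, le_trans zero_le_one (le_max_right _ _), fun u hu => ?_⟩
  rcases le_or_gt u N with h | h
  · simpa [Real.norm_eq_abs] using le_trans (hC u ⟨hu, h⟩) (le_max_left _ _)
  · have := hN u h.le
    rw [Real.dist_eq, sub_zero] at this
    exact le_trans this.le (le_max_right _ _)

lemma airyDecay_of_tendsto {f : ℝ → ℝ} (hf : Continuous f)
    (h : ∀ c : ℝ, Tendsto (fun z => Real.exp (c * z) * f z) atTop (nhds 0)) :
    AiryDecay f := by
  refine ⟨hf, fun c a => ?_⟩
  obtain ⟨C, hC0, hC⟩ := airy_bdd_on_Ici (g := fun z => Real.exp (c * z) * f z)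
    (by fun_prop) (h c) a
  refine ⟨C, hC0, fun u hu => ?_⟩
  have h1 := hC u hu
  rw [abs_mul, abs_of_pos (Real.exp_pos _)] at h1
  have h2 : Real.exp (c * u) * |f u| * Real.exp (-(c * u))
      ≤ C * Real.exp (-(c * u)) := by gcongr
  rwa [show Real.exp (c * u) * |f u| * Real.exp (-(c * u))
      = |f u| * (Real.exp (c * u) * Real.exp (-(c * u))) by ring,
    ← Real.exp_add, add_neg_cancel, Real.exp_zero, mul_one] at h2

lemma AiryDecay.id_mul {f : ℝ → ℝ} (hf : AiryDecay f) : AiryDecay (fun u => u * f u) := by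
  refine ⟨continuous_id.mul hf.1, fun c a => ?_⟩
  obtain ⟨C, hC0, hC⟩ := hf.2 (c + 1) a
  obtain ⟨M, hM0, hM⟩ := airy_bdd_on_Ici (g := fun u => u * Real.exp (-u))
    (by fun_prop)
    (by simpa using Real.tendsto_pow_mul_exp_neg_atTop_nhds_zero 1) a
  refine ⟨M * C, mul_nonneg hM0 hC0, fun u hu => ?_⟩
  have h1 := hC u hu
  have h2 : |u| * Real.exp (-u) ≤ M := by
    have := hM u hu
    rwa [abs_mul, abs_of_pos (Real.exp_pos _)] at this
  calc |u * f u| = |u| * |f u| := abs_mul u (f u)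
    _ ≤ |u| * (C * Real.exp (-((c + 1) * u))) := by gcongr
    _ = (|u| * Real.exp (-u)) * (C * Real.exp (-(c * u))) := by
        rw [show -((c + 1) * u) = -(c * u) + -u by ring, Real.exp_add]; ring
    _ ≤ M * (C * Real.exp (-(c * u))) := by gcongr
    _ = M * C * Real.exp (-(c * u)) := by ring

lemma AiryDecay.add {f g : ℝ → ℝ} (hf : AiryDecay f) (hg : AiryDecay g) :
    AiryDecay (fun u => f u + g u) := by
  refine ⟨hf.1.add hg.1, fun c a => ?_⟩
  obtain ⟨C, hC0, hC⟩ := hf.2 c a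
  obtain ⟨D, hD0, hD⟩ := hg.2 c a
  refine ⟨C + D, by positivity, fun u hu => ?_⟩
  have h1 := hC u hu; have h2 := hD u hu
  calc |f u + g u| ≤ |f u| + |g u| := abs_add_le _ _
    _ ≤ C * Real.exp (-(c * u)) + D * Real.exp (-(c * u)) := by gcongr
    _ = (C + D) * Real.exp (-(c * u)) := by ring

lemma exp_prod_collect (C D p q r : ℝ) :
    Real.exp p * (C * Real.exp q * (D * Real.exp r)) = C * D * Real.exp (p + q + r) := by
  rw [Real.exp_add, Real.exp_add]; ring

lemma airyDecay_integrableOn {f g : ℝ → ℝ} (hf : AiryDecay f) (hg : AiryDecay g)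
    (c x y a : ℝ) :
    IntegrableOn (fun l => Real.exp (c * l) * (f (x + l) * g (y + l))) (Ioi a) := by
  obtain ⟨C, hC0, hC⟩ := hf.2 ((c + 2) / 2) (x + a)
  obtain ⟨D, hD0, hD⟩ := hg.2 ((c + 2) / 2) (y + a)
  have hcf := hf.1
  have hcg := hg.1
  refine Integrable.mono'
    (g := fun l => (C * D * Real.exp (-((c + 2) / 2 * x) + -((c + 2) / 2 * y)))
      * Real.exp (-2 * l))
    (((exp_neg_integrableOn_Ioi a two_pos)).const_mul _)
    ((Continuous.aestronglyMeasurable (by fun_prop)).restrict)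
    ?_
  filter_upwards [ae_restrict_mem measurableSet_Ioi] with l hl
  have hl' : a < l := hl
  have h1 : |f (x + l)| ≤ C * Real.exp (-((c + 2) / 2 * (x + l))) :=
    hC _ (by linarith)
  have h2 : |g (y + l)| ≤ D * Real.exp (-((c + 2) / 2 * (y + l))) :=
    hD _ (by linarith)
  rw [Real.norm_eq_abs, abs_mul, abs_mul, abs_of_pos (Real.exp_pos _)]
  calc Real.exp (c * l) * (|f (x + l)| * |g (y + l)|)
      ≤ Real.exp (c * l) * (C * Real.exp (-((c + 2) / 2 * (x + l)))
          * (D * Real.exp (-((c + 2) / 2 * (y + l))))) := by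
        gcongr Real.exp (c * l) * (?_ * ?_)
    _ = C * D * Real.exp (c * l + -((c + 2) / 2 * (x + l)) + -((c + 2) / 2 * (y + l))) :=
        exp_prod_collect C D _ _ _
    _ = C * D * Real.exp ((-((c + 2) / 2 * x) + -((c + 2) / 2 * y)) + -2 * l) := by
        congr 1
        ring
    _ = C * D * Real.exp (-((c + 2) / 2 * x) + -((c + 2) / 2 * y))
          * Real.exp (-2 * l) := by rw [Real.exp_add]; ring

lemma airyDecay_hasDerivAt {f f' g : ℝ → ℝ} (hf : AiryDecay f) (hf' : AiryDecay f')
    (hd : ∀ u, HasDerivAt f (f' u) u) (hg : AiryDecay g) (c x y : ℝ) :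
    HasDerivAt (fun t => ∫ l in Ioi (0:ℝ), Real.exp (c * l) * (f (t + l) * g (y + l)))
      (∫ l in Ioi (0:ℝ), Real.exp (c * l) * (f' (x + l) * g (y + l))) x := by
  have hcf := hf.1
  have hcf' := hf'.1
  have hcg := hg.1
  obtain ⟨C, hC0, hC⟩ := hf'.2 ((c + 2) / 2) (x - 1)
  obtain ⟨D, hD0, hD⟩ := hg.2 ((c + 2) / 2) y
  have key := hasDerivAt_integral_of_dominated_loc_of_deriv_le
    (μ := volume.restrict (Ioi (0:ℝ)))
    (F := fun t l => Real.exp (c * l) * (f (t + l) * g (y + l)))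
    (F' := fun t l => Real.exp (c * l) * (f' (t + l) * g (y + l)))
    (bound := fun l => (C * D * Real.exp (|(c + 2) / 2| * (|x| + 1) + -((c + 2) / 2 * y)))
      * Real.exp (-2 * l))
    (x₀ := x) (Metric.ball_mem_nhds x one_pos)
    (Eventually.of_forall fun t => (Continuous.aestronglyMeasurable (by fun_prop)).restrict)
    (airyDecay_integrableOn hf hg c x y 0)
    ((Continuous.aestronglyMeasurable (by fun_prop)).restrict)
    ?_ (((exp_neg_integrableOn_Ioi 0 two_pos)).const_mul _) ?_
  · exact key.2
  · filter_upwards [ae_restrict_mem measurableSet_Ioi] with l hl t ht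
    have hl' : (0:ℝ) < l := hl
    have ht' : |t - x| < 1 := by simpa [Real.dist_eq] using ht
    have htx : x - 1 < t := by cases abs_lt.mp ht'; linarith
    have htx' : |t| ≤ |x| + 1 := by
      obtain ⟨ha, hb⟩ := abs_lt.mp ht'
      exact abs_le.mpr ⟨by linarith [neg_abs_le x], by linarith [le_abs_self x]⟩
    have h1 : |f' (t + l)| ≤ C * Real.exp (-((c + 2) / 2 * (t + l))) :=
      hC _ (by linarith)
    have h2 : |g (y + l)| ≤ D * Real.exp (-((c + 2) / 2 * (y + l))) :=
      hD _ (by linarith)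
    rw [Real.norm_eq_abs, abs_mul, abs_mul, abs_of_pos (Real.exp_pos _)]
    have hexp : -((c + 2) / 2 * t) ≤ |(c + 2) / 2| * (|x| + 1) := by
      calc -((c + 2) / 2 * t) ≤ |(c + 2) / 2 * t| := neg_le_abs _
        _ = |(c + 2) / 2| * |t| := abs_mul _ _
        _ ≤ |(c + 2) / 2| * (|x| + 1) := by gcongr
    calc Real.exp (c * l) * (|f' (t + l)| * |g (y + l)|)
        ≤ Real.exp (c * l) * (C * Real.exp (-((c + 2) / 2 * (t + l)))
            * (D * Real.exp (-((c + 2) / 2 * (y + l))))) := by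
          gcongr Real.exp (c * l) * (?_ * ?_)
      _ = C * D * Real.exp (c * l + -((c + 2) / 2 * (t + l)) + -((c + 2) / 2 * (y + l))) :=
          exp_prod_collect C D _ _ _
      _ ≤ C * D * Real.exp ((|(c + 2) / 2| * (|x| + 1) + -((c + 2) / 2 * y)) + -2 * l) := by
          refine mul_le_mul_of_nonneg_left (Real.exp_le_exp.mpr ?_) (by positivity)
          have : c * l + -((c + 2) / 2 * (t + l)) + -((c + 2) / 2 * (y + l))
              = -((c + 2) / 2 * t) + (-((c + 2) / 2 * y) + -2 * l) := by ring
          rw [this]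
          linarith
      _ = C * D * Real.exp (|(c + 2) / 2| * (|x| + 1) + -((c + 2) / 2 * y))
            * Real.exp (-2 * l) := by rw [Real.exp_add]; ring
  · filter_upwards with l
    intro t ht
    have h1 : HasDerivAt (fun t => f (t + l)) (f' (t + l)) t := by
      simpa [Function.comp_def] using (hd (t + l)).comp t ((hasDerivAt_id t).add_const l)
    simpa using (h1.mul_const (g (y + l))).const_mul (Real.exp (c * l))

lemma integral_Ioi_shift (F : ℝ → ℝ) (a : ℝ) :
    ∫ t in Ioi (0:ℝ), F (t + a) = ∫ u in Ioi a, F u := by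
  have h := (measurePreserving_add_right (volume : Measure ℝ) a).setIntegral_preimage_emb
    (measurableEmbedding_addRight a) F (Ioi a)
  rwa [show (fun x => x + a) ⁻¹' (Ioi a) = Ioi (0:ℝ) by ext t; simp] at h

theorem extended_airy_kernel_third_order_identity
    (A : ℝ → ℝ) (hA : ContDiff ℝ (⊤ : ℕ∞) A)
    (hAiry : ∀ x : ℝ, deriv (deriv A) x = x * A x)
    (hInt : ∀ (c : ℝ) (n : ℕ),
      IntegrableOn (fun z => z ^ n * Real.exp (c * z) * A z) (Ioi 0))
    (hInt' : ∀ (c : ℝ) (n : ℕ),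
      IntegrableOn (fun z => z ^ n * Real.exp (c * z) * deriv A z) (Ioi 0))
    (hLim : ∀ (c : ℝ) (n : ℕ),
      Tendsto (fun z => z ^ n * Real.exp (c * z) * A z) atTop (nhds 0))
    (hLim' : ∀ (c : ℝ) (n : ℕ),
      Tendsto (fun z => z ^ n * Real.exp (c * z) * deriv A z) atTop (nhds 0))
    (K : ℝ → ℝ → ℝ)
    (hK : ∀ x y : ℝ, K x y = ∫ l in Ioi (0:ℝ), A (x + l) * A (y + l))
    (Kt : ℝ → ℝ → ℝ → ℝ)
    (hKt : ∀ s x y : ℝ,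
      Kt s x y = ∫ l in Ioi (0:ℝ), Real.exp (-2 * s * l) * (A (x + l) * A (y + l)))
    (s x y : ℝ) :
    x * deriv (fun x' => Kt s x' y) x - iteratedDeriv 3 (fun x' => Kt s x' y) x
      - y * deriv (fun y' => Kt s x y') y + iteratedDeriv 3 (fun y' => Kt s x y') y
      = (x - y) * ∫ z in Ioi (0:ℝ), z * Real.exp (-2 * s * z) * K (x + z) (y + z) := by
  have hA2 : ContDiff ℝ (⊤ : ℕ∞) A := hA.of_le (by simp)
  have hdA : ContDiff ℝ (⊤ : ℕ∞) (deriv A) := (contDiff_infty_iff_deriv.mp hA2).2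
  have hAd : ∀ u : ℝ, HasDerivAt A (deriv A u) u :=
    fun u => (hA2.differentiable (by simp) u).hasDerivAt
  have hAd' : ∀ u : ℝ, HasDerivAt (deriv A) (u * A u) u := fun u => by
    have := (hdA.differentiable (by simp) u).hasDerivAt
    rwa [hAiry u] at this
  have hAd2 : ∀ u : ℝ, HasDerivAt (fun u => u * A u) (A u + u * deriv A u) u := fun u => by
    exact ((hasDerivAt_id' u).mul (hAd u)).congr_deriv (by simp)
  have DA : AiryDecay A := airyDecay_of_tendsto hA.continuous (fun c => by simpa using hLim c 0)
  have DA' : AiryDecay (deriv A) :=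
    airyDecay_of_tendsto hdA.continuous (fun c => by simpa using hLim' c 0)
  have DA2 : AiryDecay (fun u => u * A u) := DA.id_mul
  have DA3 : AiryDecay (fun u => A u + u * deriv A u) := DA.add DA'.id_mul
  -- key pointwise identity
  have keyK : ∀ a : ℝ, A (x + a) * deriv A (y + a) - deriv A (x + a) * A (y + a)
      = (x - y) * K (x + a) (y + a) := by
    intro a
    have hshift : ∫ u in Ioi a, A (x + u) * A (y + u) = K (x + a) (y + a) := by
      rw [hK, ← integral_Ioi_shift (fun u => A (x + u) * A (y + u)) a]
      congr 1
      funext t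
      rw [show x + (t + a) = x + a + t by ring, show y + (t + a) = y + a + t by ring]
    have hAx : ∀ u : ℝ, HasDerivAt (fun u => A (x + u)) (deriv A (x + u)) u := fun u => by
      simpa [Function.comp_def] using (hAd (x + u)).comp u ((hasDerivAt_id u).const_add x)
    have hA'x : ∀ u : ℝ, HasDerivAt (fun u => deriv A (x + u)) ((x + u) * A (x + u)) u :=
      fun u => by simpa [Function.comp_def] using (hAd' (x + u)).comp u ((hasDerivAt_id u).const_add x)
    have hAy : ∀ u : ℝ, HasDerivAt (fun u => A (y + u)) (deriv A (y + u)) u := fun u => by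
      simpa [Function.comp_def] using (hAd (y + u)).comp u ((hasDerivAt_id u).const_add y)
    have hA'y : ∀ u : ℝ, HasDerivAt (fun u => deriv A (y + u)) ((y + u) * A (y + u)) u :=
      fun u => by simpa [Function.comp_def] using (hAd' (y + u)).comp u ((hasDerivAt_id u).const_add y)
    have hW : ∀ u : ℝ, HasDerivAt
        (fun u => deriv A (x + u) * A (y + u) - A (x + u) * deriv A (y + u))
        ((x - y) * (A (x + u) * A (y + u))) u := by
      intro u
      have h := ((hA'x u).mul (hAy u)).sub ((hAx u).mul (hA'y u))
      refine HasDerivAt.congr_deriv h ?_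
      ring
    have tA : Tendsto A atTop (nhds 0) := by simpa using hLim 0 0
    have tA' : Tendsto (deriv A) atTop (nhds 0) := by simpa using hLim' 0 0
    have tx : Tendsto (fun u : ℝ => x + u) atTop atTop :=
      tendsto_atTop_add_const_left _ x tendsto_id
    have ty : Tendsto (fun u : ℝ => y + u) atTop atTop :=
      tendsto_atTop_add_const_left _ y tendsto_id
    have hW0 : Tendsto (fun u => deriv A (x + u) * A (y + u) - A (x + u) * deriv A (y + u))
        atTop (nhds 0) := by
      have h := ((tA'.comp tx).mul (tA.comp ty)).sub ((tA.comp tx).mul (tA'.comp ty))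
      simpa [Function.comp] using h
    have hint : IntegrableOn (fun u => (x - y) * (A (x + u) * A (y + u))) (Ioi a) := by
      have h := (airyDecay_integrableOn DA DA 0 x y a).const_mul (x - y)
      simpa [IntegrableOn] using h
    have hFTC := integral_Ioi_of_hasDerivAt_of_tendsto' (fun u _ => hW u) hint hW0
    rw [MeasureTheory.integral_const_mul, hshift] at hFTC
    linarith
  -- x-derivatives
  have hfx : (fun x' => Kt s x' y)
      = fun t => ∫ l in Ioi (0:ℝ), Real.exp (-2 * s * l) * (A (t + l) * A (y + l)) :=
    funext fun t => hKt s t y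
  have hDx1 : ∀ t : ℝ, HasDerivAt
      (fun t => ∫ l in Ioi (0:ℝ), Real.exp (-2 * s * l) * (A (t + l) * A (y + l)))
      (∫ l in Ioi (0:ℝ), Real.exp (-2 * s * l) * (deriv A (t + l) * A (y + l))) t :=
    fun t => airyDecay_hasDerivAt DA DA' hAd DA (-2 * s) t y
  have hDx2 : ∀ t : ℝ, HasDerivAt
      (fun t => ∫ l in Ioi (0:ℝ), Real.exp (-2 * s * l) * (deriv A (t + l) * A (y + l)))
      (∫ l in Ioi (0:ℝ), Real.exp (-2 * s * l) * (((t + l) * A (t + l)) * A (y + l))) t :=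
    fun t => airyDecay_hasDerivAt DA' DA2 hAd' DA (-2 * s) t y
  have hDx3 : ∀ t : ℝ, HasDerivAt
      (fun t => ∫ l in Ioi (0:ℝ), Real.exp (-2 * s * l) * (((t + l) * A (t + l)) * A (y + l)))
      (∫ l in Ioi (0:ℝ), Real.exp (-2 * s * l)
        * ((A (t + l) + (t + l) * deriv A (t + l)) * A (y + l))) t :=
    fun t => airyDecay_hasDerivAt DA2 DA3 hAd2 DA (-2 * s) t y
  have e1x : deriv (fun x' => Kt s x' y)
      = fun t => ∫ l in Ioi (0:ℝ), Real.exp (-2 * s * l) * (deriv A (t + l) * A (y + l)) := by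
    rw [hfx]; exact funext fun t => (hDx1 t).deriv
  have d1x : deriv (fun x' => Kt s x' y) x
      = ∫ l in Ioi (0:ℝ), Real.exp (-2 * s * l) * (deriv A (x + l) * A (y + l)) := by
    rw [e1x]
  have e3x : iteratedDeriv 3 (fun x' => Kt s x' y) x
      = ∫ l in Ioi (0:ℝ), Real.exp (-2 * s * l)
          * ((A (x + l) + (x + l) * deriv A (x + l)) * A (y + l)) := by
    have e2' : deriv (fun t => ∫ l in Ioi (0:ℝ),
        Real.exp (-2 * s * l) * (deriv A (t + l) * A (y + l)))
        = fun t => ∫ l in Ioi (0:ℝ),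
            Real.exp (-2 * s * l) * (((t + l) * A (t + l)) * A (y + l)) :=
      funext fun t => (hDx2 t).deriv
    rw [show (3:ℕ) = 1 + 1 + 1 from rfl, iteratedDeriv_succ, iteratedDeriv_succ,
      iteratedDeriv_one, e1x, e2']
    exact (hDx3 x).deriv
  -- y-derivatives
  have hfy : (fun y' => Kt s x y')
      = fun t => ∫ l in Ioi (0:ℝ), Real.exp (-2 * s * l) * (A (t + l) * A (x + l)) := by
    funext t
    rw [hKt]
    congr 1
    funext l
    ring
  have hDy1 : ∀ t : ℝ, HasDerivAt
      (fun t => ∫ l in Ioi (0:ℝ), Real.exp (-2 * s * l) * (A (t + l) * A (x + l)))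
      (∫ l in Ioi (0:ℝ), Real.exp (-2 * s * l) * (deriv A (t + l) * A (x + l))) t :=
    fun t => airyDecay_hasDerivAt DA DA' hAd DA (-2 * s) t x
  have hDy2 : ∀ t : ℝ, HasDerivAt
      (fun t => ∫ l in Ioi (0:ℝ), Real.exp (-2 * s * l) * (deriv A (t + l) * A (x + l)))
      (∫ l in Ioi (0:ℝ), Real.exp (-2 * s * l) * (((t + l) * A (t + l)) * A (x + l))) t :=
    fun t => airyDecay_hasDerivAt DA' DA2 hAd' DA (-2 * s) t x
  have hDy3 : ∀ t : ℝ, HasDerivAt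
      (fun t => ∫ l in Ioi (0:ℝ), Real.exp (-2 * s * l) * (((t + l) * A (t + l)) * A (x + l)))
      (∫ l in Ioi (0:ℝ), Real.exp (-2 * s * l)
        * ((A (t + l) + (t + l) * deriv A (t + l)) * A (x + l))) t :=
    fun t => airyDecay_hasDerivAt DA2 DA3 hAd2 DA (-2 * s) t x
  have e1y : deriv (fun y' => Kt s x y')
      = fun t => ∫ l in Ioi (0:ℝ), Real.exp (-2 * s * l) * (deriv A (t + l) * A (x + l)) := by
    rw [hfy]; exact funext fun t => (hDy1 t).deriv
  have d1y : deriv (fun y' => Kt s x y') y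
      = ∫ l in Ioi (0:ℝ), Real.exp (-2 * s * l) * (deriv A (y + l) * A (x + l)) := by
    rw [e1y]
  have e3y : iteratedDeriv 3 (fun y' => Kt s x y') y
      = ∫ l in Ioi (0:ℝ), Real.exp (-2 * s * l)
          * ((A (y + l) + (y + l) * deriv A (y + l)) * A (x + l)) := by
    have e2' : deriv (fun t => ∫ l in Ioi (0:ℝ),
        Real.exp (-2 * s * l) * (deriv A (t + l) * A (x + l)))
        = fun t => ∫ l in Ioi (0:ℝ),
            Real.exp (-2 * s * l) * (((t + l) * A (t + l)) * A (x + l)) :=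
      funext fun t => (hDy2 t).deriv
    rw [show (3:ℕ) = 1 + 1 + 1 from rfl, iteratedDeriv_succ, iteratedDeriv_succ,
      iteratedDeriv_one, e1y, e2']
    exact (hDy3 y).deriv
  -- assemble
  rw [d1x, e3x, d1y, e3y]
  have iP1 : Integrable (fun l => x * (Real.exp (-2 * s * l) * (deriv A (x + l) * A (y + l))))
      (volume.restrict (Ioi 0)) :=
    (airyDecay_integrableOn DA' DA (-2 * s) x y 0).const_mul x
  have iP3 : Integrable (fun l => Real.exp (-2 * s * l)
      * ((A (x + l) + (x + l) * deriv A (x + l)) * A (y + l))) (volume.restrict (Ioi 0)) :=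
    airyDecay_integrableOn DA3 DA (-2 * s) x y 0
  have iQ1 : Integrable (fun l => y * (Real.exp (-2 * s * l) * (deriv A (y + l) * A (x + l))))
      (volume.restrict (Ioi 0)) :=
    (airyDecay_integrableOn DA' DA (-2 * s) y x 0).const_mul y
  have iQ3 : Integrable (fun l => Real.exp (-2 * s * l)
      * ((A (y + l) + (y + l) * deriv A (y + l)) * A (x + l))) (volume.restrict (Ioi 0)) :=
    airyDecay_integrableOn DA3 DA (-2 * s) y x 0
  have i12 : Integrable (fun l => x * (Real.exp (-2 * s * l) * (deriv A (x + l) * A (y + l)))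
      - Real.exp (-2 * s * l) * ((A (x + l) + (x + l) * deriv A (x + l)) * A (y + l)))
      (volume.restrict (Ioi 0)) := iP1.sub iP3
  have i123 : Integrable (fun l => x * (Real.exp (-2 * s * l) * (deriv A (x + l) * A (y + l)))
      - Real.exp (-2 * s * l) * ((A (x + l) + (x + l) * deriv A (x + l)) * A (y + l))
      - y * (Real.exp (-2 * s * l) * (deriv A (y + l) * A (x + l))))
      (volume.restrict (Ioi 0)) := i12.sub iQ1
  have hmain : (∫ l in Ioi (0:ℝ),
        (x * (Real.exp (-2 * s * l) * (deriv A (x + l) * A (y + l)))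
          - Real.exp (-2 * s * l) * ((A (x + l) + (x + l) * deriv A (x + l)) * A (y + l))
          - y * (Real.exp (-2 * s * l) * (deriv A (y + l) * A (x + l)))
          + Real.exp (-2 * s * l) * ((A (y + l) + (y + l) * deriv A (y + l)) * A (x + l))))
      = x * (∫ l in Ioi (0:ℝ), Real.exp (-2 * s * l) * (deriv A (x + l) * A (y + l)))
        - (∫ l in Ioi (0:ℝ), Real.exp (-2 * s * l)
            * ((A (x + l) + (x + l) * deriv A (x + l)) * A (y + l)))
        - y * (∫ l in Ioi (0:ℝ), Real.exp (-2 * s * l) * (deriv A (y + l) * A (x + l)))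
        + (∫ l in Ioi (0:ℝ), Real.exp (-2 * s * l)
            * ((A (y + l) + (y + l) * deriv A (y + l)) * A (x + l))) := by
    rw [MeasureTheory.integral_add i123 iQ3, MeasureTheory.integral_sub i12 iQ1,
      MeasureTheory.integral_sub iP1 iP3, MeasureTheory.integral_const_mul,
      MeasureTheory.integral_const_mul]
  rw [← hmain, ← MeasureTheory.integral_const_mul (x - y)]
  congr 1
  funext l
  linear_combination (Real.exp (-2 * s * l) * l) * keyK l
end

section
/- For all s, x, y ∈ ℝ, the extended kernel satisfies the identity (Ψ(x,s;−∂x) − Ψ(y,−s;∂y) − (3/2)s·(∂/∂s)(∂x − ∂y))K̃_s(x,y) = ¼(x−y)(x+y+6s²)·K̃_s(x,y), where the left-hand side in expanded form reads ¼(∂x⁴ − ∂y⁴)K̃_s(x,y) + (3/2)s²(∂x² − ∂y²)K̃_s(x,y) + 4s·(x·∂xK̃_s(x,y) − ∂x³K̃_s(x,y) − y·∂yK̃_s(x,y) + ∂y³K̃_s(x,y)) − (3/2)s·(d/ds)[(∂x − ∂y)K̃_s(x,y)], with ∂x and ∂y denoting partial differentiation in the first and second argument respectively. -/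
open MeasureTheory Real Filter Set

namespace AiryAux

/-- rapid decay at `+∞`: beats every exponential. -/
def RD (f : ℝ → ℝ) : Prop :=
  ∀ c : ℝ, Tendsto (fun z => Real.exp (c * z) * f z) atTop (nhds 0)

lemma rd_congr {f g : ℝ → ℝ} (h : ∀ z, f z = g z) (hf : RD f) : RD g := by
  have : f = g := funext h
  rwa [← this]

lemma rd_add {f g : ℝ → ℝ} (hf : RD f) (hg : RD g) : RD (fun z => f z + g z) := by
  intro c
  simpa [mul_add] using (hf c).add (hg c)

lemma rd_sub {f g : ℝ → ℝ} (hf : RD f) (hg : RD g) : RD (fun z => f z - g z) := by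
  intro c
  simpa [mul_sub] using (hf c).sub (hg c)

lemma rd_const_mul {f : ℝ → ℝ} (a : ℝ) (hf : RD f) : RD (fun z => a * f z) := by
  intro c
  have := (hf c).const_mul a
  simpa [mul_comm, mul_assoc, mul_left_comm] using this

lemma rd_exp_mul {f : ℝ → ℝ} (k : ℝ) (hf : RD f) : RD (fun z => Real.exp (k * z) * f z) := by
  intro c
  have := hf (c + k)
  refine this.congr fun z => ?_
  rw [add_mul, Real.exp_add]
  ring

lemma ev_abs_le_one {f : ℝ → ℝ} (h : Tendsto f atTop (nhds 0)) :
    ∀ᶠ z in atTop, |f z| ≤ 1 := by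
  have h2 := h.abs
  rw [abs_zero] at h2
  exact h2.eventually_le_const one_pos

lemma rd_abs {f : ℝ → ℝ} (hf : RD f) : RD (fun z => |f z|) := by
  intro c
  have h := (hf c).abs
  rw [abs_zero] at h
  refine h.congr fun z => ?_
  simp [abs_mul, abs_of_pos (Real.exp_pos _)]

lemma rd_id_mul {f : ℝ → ℝ} (hf : RD f) : RD (fun z => z * f z) := by
  intro c
  have h := (hf (c + 1)).abs
  refine squeeze_zero_norm' ?_ (by simpa using h)
  filter_upwards [eventually_ge_atTop (0 : ℝ)] with z hz
  have hz1 : z ≤ Real.exp z := (Real.add_one_le_exp z).trans' (by linarith)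
  have : |Real.exp (c * z) * (z * f z)| = Real.exp (c * z) * z * |f z| := by
    rw [abs_mul, abs_mul, abs_of_pos (Real.exp_pos _), abs_of_nonneg hz]
    ring
  rw [Real.norm_eq_abs, this]
  have : Real.exp (c * z) * z * |f z| ≤ Real.exp (c * z) * Real.exp z * |f z| := by
    apply mul_le_mul_of_nonneg_right _ (abs_nonneg _)
    exact mul_le_mul_of_nonneg_left hz1 (Real.exp_pos _).le
  refine this.trans (le_of_eq ?_)
  rw [← Real.exp_add]
  ring_nf

lemma rd_shift {f : ℝ → ℝ} (hf : RD f) (t : ℝ) : RD (fun z => f (t + z)) := by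
  intro c
  have h1 : Tendsto (fun z : ℝ => t + z) atTop atTop :=
    tendsto_atTop_add_const_left _ t tendsto_id
  have h := ((hf c).comp h1).const_mul (Real.exp (-(c * t)))
  simp only [mul_zero] at h
  refine h.congr fun z => ?_
  simp only [Function.comp]
  rw [← mul_assoc, ← Real.exp_add]
  ring_nf

lemma tendsto_zero_of_rd {f : ℝ → ℝ} (hf : RD f) : Tendsto f atTop (nhds 0) := by
  have := hf 0
  simpa using this

lemma rd_mul_bdd {f g : ℝ → ℝ} (hf : RD f) {M : ℝ}
    (hg : ∀ᶠ z in atTop, |g z| ≤ M) : RD (fun z => f z * g z) := by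
  intro c
  have h := ((hf c).abs.const_mul M)
  refine squeeze_zero_norm' ?_ (by simpa using h)
  filter_upwards [hg] with z hz
  rw [Real.norm_eq_abs]
  have : |Real.exp (c * z) * (f z * g z)| = |Real.exp (c * z) * f z| * |g z| := by
    rw [abs_mul, abs_mul, abs_mul]; ring
  rw [this]
  calc |Real.exp (c * z) * f z| * |g z| ≤ |Real.exp (c * z) * f z| * M :=
        mul_le_mul_of_nonneg_left hz (abs_nonneg _)
    _ = M * |Real.exp (c * z) * f z| := by ring
    _ = M * (Real.exp (c * z) * |f z|) := by rw [abs_mul, abs_of_pos (Real.exp_pos _)]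

lemma rd_mul_tendsto {f g : ℝ → ℝ} (hf : RD f) (hg : Tendsto g atTop (nhds 0)) :
    RD (fun z => f z * g z) := by
  exact rd_mul_bdd hf (ev_abs_le_one hg)

/-- boundedness on a half line of a continuous function tending to zero. -/
lemma bdd_of_tendsto {g : ℝ → ℝ} (hg : Continuous g) (h : Tendsto g atTop (nhds 0))
    (a : ℝ) : ∃ M : ℝ, ∀ z, a ≤ z → |g z| ≤ M := by
  have h1 := ev_abs_le_one h
  obtain ⟨R, hR⟩ := eventually_atTop.mp h1
  obtain ⟨C, hC⟩ := (isCompact_Icc (a := a) (b := R)).exists_bound_of_continuousOn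
    hg.continuousOn
  refine ⟨max C 1, fun z hz => ?_⟩
  rcases le_total z R with h' | h'
  · exact le_max_of_le_left (by simpa using hC z ⟨hz, h'⟩)
  · exact le_max_of_le_right (hR z h')

lemma integrableOn_of_rd {f : ℝ → ℝ} (hf : Continuous f) (hrd : RD f) :
    IntegrableOn f (Ioi (0:ℝ)) := by
  apply integrable_of_isBigO_exp_neg (one_pos) hf.continuousOn
  rw [Asymptotics.isBigO_iff]
  refine ⟨1, ?_⟩
  have h := (rd_exp_mul 1 hrd) 0
  simp only [zero_mul, Real.exp_zero, one_mul] at h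
  have h1 := ev_abs_le_one h
  filter_upwards [h1] with z hz
  rw [Real.norm_eq_abs, Real.norm_eq_abs]
  have he : |Real.exp z * f z| = Real.exp z * |f z| := by
    rw [abs_mul, abs_of_pos (Real.exp_pos _)]
  rw [he] at hz
  have hfz : |f z| ≤ Real.exp (-z) := by
    have hep := Real.exp_pos z
    calc |f z| = (Real.exp z)⁻¹ * (Real.exp z * |f z|) := by field_simp
      _ ≤ (Real.exp z)⁻¹ * 1 := mul_le_mul_of_nonneg_left hz (inv_pos.mpr hep).le
      _ = Real.exp (-z) := by rw [Real.exp_neg, mul_one]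
  calc |f z| ≤ Real.exp (-z) := hfz
    _ ≤ 1 * |Real.exp (-1 * z)| := by
        rw [one_mul, abs_of_pos (Real.exp_pos _), neg_one_mul]

/-- integrability of our standard integrand shape. -/
lemma integrableOn_shape {c : ℝ} {f g : ℝ → ℝ} (hf : Continuous f) (hrf : RD f)
    (hg : Continuous g) (hrg : RD g) (x₀ : ℝ) :
    IntegrableOn (fun l => Real.exp (c * l) * (f (x₀ + l) * g l)) (Ioi (0:ℝ)) := by
  apply integrableOn_of_rd
  · exact (Real.continuous_exp.comp (continuous_const.mul continuous_id)).mul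
      ((hf.comp (continuous_const.add continuous_id)).mul hg)
  · exact rd_exp_mul c (rd_mul_tendsto (rd_shift hrf x₀) (tendsto_zero_of_rd hrg))

/-- differentiation under the integral sign in the shift parameter. -/
lemma keyX (c : ℝ) (f f' g : ℝ → ℝ)
    (hf : Continuous f) (hf' : Continuous f')
    (hfd : ∀ z, HasDerivAt f (f' z) z)
    (hrf : RD f) (hrf' : RD f')
    (hg : Continuous g) (hrg : RD g) (x₀ : ℝ) :
    HasDerivAt (fun x => ∫ l in Ioi (0:ℝ), Real.exp (c * l) * (f (x + l) * g l))
      (∫ l in Ioi (0:ℝ), Real.exp (c * l) * (f' (x₀ + l) * g l)) x₀ := by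
  obtain ⟨M, hM⟩ := bdd_of_tendsto hf' (tendsto_zero_of_rd hrf') (x₀ - 1)
  have h := hasDerivAt_integral_of_dominated_loc_of_deriv_le (μ := volume.restrict (Ioi 0))
    (F := fun x l => Real.exp (c * l) * (f (x + l) * g l))
    (F' := fun x l => Real.exp (c * l) * (f' (x + l) * g l))
    (bound := fun l => M * (Real.exp (c * l) * |g l|))
    (s := Metric.ball x₀ 1) (Metric.ball_mem_nhds x₀ one_pos)
    (Eventually.of_forall fun x =>
      (((Real.continuous_exp.comp (continuous_const.mul continuous_id)).mul
        ((hf.comp (continuous_const.add continuous_id)).mul hg)).aestronglyMeasurable).restrict)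
    (integrableOn_shape hf hrf hg hrg x₀)
    ((((Real.continuous_exp.comp (continuous_const.mul continuous_id)).mul
        ((hf'.comp (continuous_const.add continuous_id)).mul hg)).aestronglyMeasurable).restrict)
    ?_ ?_ ?_
  · exact h.2
  · -- bound
    filter_upwards [ae_restrict_mem measurableSet_Ioi] with l hl x hx
    have hxl : x₀ - 1 ≤ x + l := by
      rw [Metric.mem_ball, Real.dist_eq] at hx
      have := abs_lt.mp hx
      have hl0 : (0:ℝ) < l := hl
      linarith [this.1]
    have h1 : ‖Real.exp (c * l) * (f' (x + l) * g l)‖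
        = Real.exp (c * l) * (|f' (x + l)| * |g l|) := by
      rw [Real.norm_eq_abs, abs_mul, abs_mul, abs_of_pos (Real.exp_pos _)]
    rw [h1]
    have := hM (x + l) hxl
    calc Real.exp (c * l) * (|f' (x + l)| * |g l|)
        ≤ Real.exp (c * l) * (M * |g l|) := by
          apply mul_le_mul_of_nonneg_left _ (Real.exp_pos _).le
          exact mul_le_mul_of_nonneg_right this (abs_nonneg _)
      _ = M * (Real.exp (c * l) * |g l|) := by ring
  · -- bound integrable
    apply Integrable.const_mul
    apply integrableOn_of_rd
    · exact (Real.continuous_exp.comp (continuous_const.mul continuous_id)).mul hg.abs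
    · exact rd_exp_mul c (rd_abs hrg)
  · -- differentiability
    refine Eventually.of_forall fun l => fun x _ => ?_
    have h1 : HasDerivAt (fun x => f (x + l)) (f' (x + l)) x :=
      HasDerivAt.comp_add_const x l (hfd (x + l))
    simpa [mul_comm, mul_assoc, mul_left_comm] using (h1.mul_const (g l)).const_mul (Real.exp (c * l))

/-- differentiation under the integral sign in `s`. -/
lemma keyS (h : ℝ → ℝ) (hh : Continuous h) (hrh : RD h) (s₀ : ℝ) :
    HasDerivAt (fun t => ∫ l in Ioi (0:ℝ), Real.exp (-2 * t * l) * h l)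
      (∫ l in Ioi (0:ℝ), -2 * l * Real.exp (-2 * s₀ * l) * h l) s₀ := by
  have hcont : ∀ t : ℝ, Continuous fun l => Real.exp (-2 * t * l) * h l := fun t =>
    (Real.continuous_exp.comp (continuous_const.mul continuous_id)).mul hh
  have hcont' : ∀ t : ℝ, Continuous fun l => -2 * l * Real.exp (-2 * t * l) * h l := fun t =>
    ((continuous_const.mul continuous_id).mul
      (Real.continuous_exp.comp (continuous_const.mul continuous_id))).mul hh
  have hK := hasDerivAt_integral_of_dominated_loc_of_deriv_le (μ := volume.restrict (Ioi 0))
    (F := fun t l => Real.exp (-2 * t * l) * h l)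
    (F' := fun t l => -2 * l * Real.exp (-2 * t * l) * h l)
    (bound := fun l => 2 * (l * (Real.exp ((-2 * s₀ + 2) * l) * |h l|)))
    (s := Metric.ball s₀ 1) (Metric.ball_mem_nhds s₀ one_pos)
    (Eventually.of_forall fun t => ((hcont t).aestronglyMeasurable).restrict)
    ?_ (((hcont' s₀).aestronglyMeasurable).restrict) ?_ ?_ ?_
  · exact hK.2
  · apply integrableOn_of_rd (hcont s₀)
    exact rd_exp_mul _ hrh
  · -- bound
    filter_upwards [ae_restrict_mem measurableSet_Ioi] with l hl t ht
    have hl0 : (0:ℝ) < l := hl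
    rw [Metric.mem_ball, Real.dist_eq] at ht
    have habs := abs_lt.mp ht
    have hexp : Real.exp (-2 * t * l) ≤ Real.exp ((-2 * s₀ + 2) * l) := by
      apply Real.exp_le_exp.mpr
      nlinarith [habs.1, habs.2]
    have h1 : ‖-2 * l * Real.exp (-2 * t * l) * h l‖
        = 2 * l * Real.exp (-2 * t * l) * |h l| := by
      rw [Real.norm_eq_abs, abs_mul, abs_mul, abs_of_pos (Real.exp_pos _),
        abs_mul, abs_of_nonneg hl0.le]
      norm_num
    rw [h1]
    calc 2 * l * Real.exp (-2 * t * l) * |h l|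
        ≤ 2 * l * Real.exp ((-2 * s₀ + 2) * l) * |h l| := by
          apply mul_le_mul_of_nonneg_right _ (abs_nonneg _)
          exact mul_le_mul_of_nonneg_left hexp (by linarith)
      _ = 2 * (l * (Real.exp ((-2 * s₀ + 2) * l) * |h l|)) := by ring
  · -- bound integrable
    apply integrableOn_of_rd
    · exact continuous_const.mul (continuous_id.mul
        ((Real.continuous_exp.comp (continuous_const.mul continuous_id)).mul hh.abs))
    · exact rd_const_mul 2 (rd_id_mul (rd_exp_mul _ (rd_abs hrh)))
  · -- differentiability
    refine Eventually.of_forall fun l => fun t _ => ?_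
    have h1 : HasDerivAt (fun t : ℝ => -2 * t * l) (-2 * l) t := by
      simpa using ((hasDerivAt_id t).const_mul (-2 : ℝ)).mul_const l
    have h2 := (h1.exp).mul_const (h l)
    refine h2.congr_deriv ?_
    ring

lemma integral_comb7 (f1 f2 f3 f4 f5 f6 f7 : ℝ → ℝ) (c1 c2 c3 c4 c5 c6 c7 : ℝ)
    (h1 : IntegrableOn f1 (Ioi (0:ℝ))) (h2 : IntegrableOn f2 (Ioi (0:ℝ)))
    (h3 : IntegrableOn f3 (Ioi (0:ℝ))) (h4 : IntegrableOn f4 (Ioi (0:ℝ)))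
    (h5 : IntegrableOn f5 (Ioi (0:ℝ))) (h6 : IntegrableOn f6 (Ioi (0:ℝ)))
    (h7 : IntegrableOn f7 (Ioi (0:ℝ))) :
    ∫ l in Ioi (0:ℝ), (c1 * f1 l + c2 * f2 l + c3 * f3 l + c4 * f4 l + c5 * f5 l
        + c6 * f6 l + c7 * f7 l)
      = c1 * (∫ l in Ioi (0:ℝ), f1 l) + c2 * (∫ l in Ioi (0:ℝ), f2 l)
        + c3 * (∫ l in Ioi (0:ℝ), f3 l) + c4 * (∫ l in Ioi (0:ℝ), f4 l)
        + c5 * (∫ l in Ioi (0:ℝ), f5 l) + c6 * (∫ l in Ioi (0:ℝ), f6 l)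
        + c7 * (∫ l in Ioi (0:ℝ), f7 l) := by
  have i1 := h1.const_mul c1
  have i2 := h2.const_mul c2
  have i3 := h3.const_mul c3
  have i4 := h4.const_mul c4
  have i5 := h5.const_mul c5
  have i6 := h6.const_mul c6
  have i7 := h7.const_mul c7
  have j2 : Integrable (fun l => c1 * f1 l + c2 * f2 l) (volume.restrict (Ioi 0)) := i1.add i2
  have j3 : Integrable (fun l => c1 * f1 l + c2 * f2 l + c3 * f3 l)
    (volume.restrict (Ioi 0)) := j2.add i3
  have j4 : Integrable (fun l => c1 * f1 l + c2 * f2 l + c3 * f3 l + c4 * f4 l)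
    (volume.restrict (Ioi 0)) := j3.add i4
  have j5 : Integrable (fun l => c1 * f1 l + c2 * f2 l + c3 * f3 l + c4 * f4 l + c5 * f5 l)
    (volume.restrict (Ioi 0)) := j4.add i5
  have j6 : Integrable (fun l => c1 * f1 l + c2 * f2 l + c3 * f3 l + c4 * f4 l + c5 * f5 l
    + c6 * f6 l) (volume.restrict (Ioi 0)) := j5.add i6
  rw [integral_add j6 i7, integral_add j5 i6, integral_add j4 i5, integral_add j3 i4,
    integral_add j2 i3, integral_add i1 i2,
    integral_const_mul, integral_const_mul, integral_const_mul, integral_const_mul,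
    integral_const_mul, integral_const_mul, integral_const_mul]

/-- the full chain of iterated derivatives of the parametric integral, using
the Airy equation to express everything through `A` and `deriv A`. -/
lemma airy_chain (A : ℝ → ℝ) (hA : ContDiff ℝ (⊤ : ℕ∞) A)
    (hAiry : ∀ z : ℝ, deriv (deriv A) z = z * A z)
    (rdA : RD A) (rdA' : RD (deriv A))
    (g : ℝ → ℝ) (hg : Continuous g) (hrg : RD g) (c x : ℝ) :
    (deriv (fun x' => ∫ l in Ioi (0:ℝ), Real.exp (c * l) * (A (x' + l) * g l)) x
      = ∫ l in Ioi (0:ℝ), Real.exp (c * l) * (deriv A (x + l) * g l))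
    ∧ (iteratedDeriv 2 (fun x' => ∫ l in Ioi (0:ℝ), Real.exp (c * l) * (A (x' + l) * g l)) x
      = ∫ l in Ioi (0:ℝ), Real.exp (c * l) * ((x + l) * A (x + l) * g l))
    ∧ (iteratedDeriv 3 (fun x' => ∫ l in Ioi (0:ℝ), Real.exp (c * l) * (A (x' + l) * g l)) x
      = ∫ l in Ioi (0:ℝ), Real.exp (c * l) * ((A (x + l) + (x + l) * deriv A (x + l)) * g l))
    ∧ (iteratedDeriv 4 (fun x' => ∫ l in Ioi (0:ℝ), Real.exp (c * l) * (A (x' + l) * g l)) x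
      = ∫ l in Ioi (0:ℝ), Real.exp (c * l)
          * ((2 * deriv A (x + l) + (x + l) * ((x + l) * A (x + l))) * g l)) := by
  have hAs : ContDiff ℝ (⊤ : ℕ∞) A := hA.of_le (by simp)
  have hcA : Continuous A := hAs.continuous
  have hA' : ContDiff ℝ (⊤ : ℕ∞) (deriv A) := (contDiff_infty_iff_deriv.mp hAs).2
  have hcA' : Continuous (deriv A) := hA'.continuous
  have hdA : ∀ z, HasDerivAt A (deriv A z) z := fun z => (hAs.differentiable (by simp) z).hasDerivAt
  have hdA' : ∀ z, HasDerivAt (deriv A) (z * A z) z := fun z => by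
    have := (hA'.differentiable (by simp) z).hasDerivAt
    rwa [hAiry z] at this
  have h23 : ∀ z, HasDerivAt (fun z : ℝ => z * A z) (A z + z * deriv A z) z := fun z => by
    have := (hasDerivAt_id z).mul (hdA z)
    refine this.congr_deriv ?_
    simp
  have h34 : ∀ z, HasDerivAt (fun z : ℝ => A z + z * deriv A z)
      (2 * deriv A z + z * (z * A z)) z := fun z => by
    have := (hdA z).add ((hasDerivAt_id z).mul (hdA' z))
    refine this.congr_deriv ?_
    simp only [id_eq, one_mul]
    ring
  have hcf2 : Continuous fun z : ℝ => z * A z := continuous_id.mul hcA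
  have hcf3 : Continuous fun z : ℝ => A z + z * deriv A z :=
    hcA.add (continuous_id.mul hcA')
  have hcf4 : Continuous fun z : ℝ => 2 * deriv A z + z * (z * A z) :=
    (continuous_const.mul hcA').add (continuous_id.mul (continuous_id.mul hcA))
  have rdf2 : RD fun z : ℝ => z * A z := rd_id_mul rdA
  have rdf3 : RD fun z : ℝ => A z + z * deriv A z := rd_add rdA (rd_id_mul rdA')
  have rdf4 : RD fun z : ℝ => 2 * deriv A z + z * (z * A z) :=
    rd_add (rd_const_mul 2 rdA') (rd_id_mul (rd_id_mul rdA))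
  have hD1 : ∀ x' : ℝ,
      HasDerivAt (fun x'' => ∫ l in Ioi (0:ℝ), Real.exp (c * l) * (A (x'' + l) * g l))
        (∫ l in Ioi (0:ℝ), Real.exp (c * l) * (deriv A (x' + l) * g l)) x' := fun x' =>
    keyX c A (deriv A) g hcA hcA' hdA rdA rdA' hg hrg x'
  have hD2 : ∀ x' : ℝ,
      HasDerivAt (fun x'' => ∫ l in Ioi (0:ℝ), Real.exp (c * l) * (deriv A (x'' + l) * g l))
        (∫ l in Ioi (0:ℝ), Real.exp (c * l) * ((x' + l) * A (x' + l) * g l)) x' := fun x' =>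
    keyX c (deriv A) (fun z => z * A z) g hcA' hcf2 hdA' rdA' rdf2 hg hrg x'
  have hD3 : ∀ x' : ℝ,
      HasDerivAt (fun x'' => ∫ l in Ioi (0:ℝ), Real.exp (c * l) * ((x'' + l) * A (x'' + l) * g l))
        (∫ l in Ioi (0:ℝ), Real.exp (c * l) * ((A (x' + l) + (x' + l) * deriv A (x' + l)) * g l))
        x' := fun x' =>
    keyX c (fun z => z * A z) (fun z => A z + z * deriv A z) g hcf2 hcf3 h23 rdf2 rdf3 hg hrg x'
  have hD4 : ∀ x' : ℝ,
      HasDerivAt (fun x'' => ∫ l in Ioi (0:ℝ),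
          Real.exp (c * l) * ((A (x'' + l) + (x'' + l) * deriv A (x'' + l)) * g l))
        (∫ l in Ioi (0:ℝ), Real.exp (c * l)
          * ((2 * deriv A (x' + l) + (x' + l) * ((x' + l) * A (x' + l))) * g l)) x' := fun x' =>
    keyX c (fun z => A z + z * deriv A z) (fun z => 2 * deriv A z + z * (z * A z)) g
      hcf3 hcf4 h34 rdf3 rdf4 hg hrg x'
  have E1 : deriv (fun x' => ∫ l in Ioi (0:ℝ), Real.exp (c * l) * (A (x' + l) * g l))
      = fun x' => ∫ l in Ioi (0:ℝ), Real.exp (c * l) * (deriv A (x' + l) * g l) :=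
    funext fun x' => (hD1 x').deriv
  have E2 : iteratedDeriv 2 (fun x' => ∫ l in Ioi (0:ℝ), Real.exp (c * l) * (A (x' + l) * g l))
      = fun x' => ∫ l in Ioi (0:ℝ), Real.exp (c * l) * ((x' + l) * A (x' + l) * g l) := by
    rw [show (2:ℕ) = 1 + 1 from rfl, iteratedDeriv_succ, iteratedDeriv_one, E1]
    exact funext fun x' => (hD2 x').deriv
  have E3 : iteratedDeriv 3 (fun x' => ∫ l in Ioi (0:ℝ), Real.exp (c * l) * (A (x' + l) * g l))
      = fun x' => ∫ l in Ioi (0:ℝ), Real.exp (c * l)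
          * ((A (x' + l) + (x' + l) * deriv A (x' + l)) * g l) := by
    rw [show (3:ℕ) = 2 + 1 from rfl, iteratedDeriv_succ, E2]
    exact funext fun x' => (hD3 x').deriv
  have E4 : iteratedDeriv 4 (fun x' => ∫ l in Ioi (0:ℝ), Real.exp (c * l) * (A (x' + l) * g l))
      = fun x' => ∫ l in Ioi (0:ℝ), Real.exp (c * l)
          * ((2 * deriv A (x' + l) + (x' + l) * ((x' + l) * A (x' + l))) * g l) := by
    rw [show (4:ℕ) = 3 + 1 from rfl, iteratedDeriv_succ, E3]
    exact funext fun x' => (hD4 x').deriv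
  exact ⟨by rw [E1], by rw [E2], by rw [E3], by rw [E4]⟩

end AiryAux

open AiryAux in
theorem extended_airy_kernel_Psi_identity
    (A : ℝ → ℝ) (hA : ContDiff ℝ (⊤ : ℕ∞) A)
    (hAiry : ∀ x : ℝ, deriv (deriv A) x = x * A x)
    (hInt : ∀ (c : ℝ) (n : ℕ),
      IntegrableOn (fun z => z ^ n * Real.exp (c * z) * A z) (Ioi 0))
    (hInt' : ∀ (c : ℝ) (n : ℕ),
      IntegrableOn (fun z => z ^ n * Real.exp (c * z) * deriv A z) (Ioi 0))
    (hLim : ∀ (c : ℝ) (n : ℕ),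
      Tendsto (fun z => z ^ n * Real.exp (c * z) * A z) atTop (nhds 0))
    (hLim' : ∀ (c : ℝ) (n : ℕ),
      Tendsto (fun z => z ^ n * Real.exp (c * z) * deriv A z) atTop (nhds 0))
    (K : ℝ → ℝ → ℝ)
    (hK : ∀ x y : ℝ, K x y = ∫ l in Ioi (0:ℝ), A (x + l) * A (y + l))
    (Kt : ℝ → ℝ → ℝ → ℝ)
    (hKt : ∀ s x y : ℝ,
      Kt s x y = ∫ l in Ioi (0:ℝ), Real.exp (-2 * s * l) * (A (x + l) * A (y + l)))
    (s x y : ℝ) :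
    (1/4) * (iteratedDeriv 4 (fun x' => Kt s x' y) x
        - iteratedDeriv 4 (fun y' => Kt s x y') y)
      + (3/2) * s ^ 2 * (iteratedDeriv 2 (fun x' => Kt s x' y) x
          - iteratedDeriv 2 (fun y' => Kt s x y') y)
      + 4 * s * (x * deriv (fun x' => Kt s x' y) x - iteratedDeriv 3 (fun x' => Kt s x' y) x
          - y * deriv (fun y' => Kt s x y') y + iteratedDeriv 3 (fun y' => Kt s x y') y)
      - (3/2) * s *
          deriv (fun s' => deriv (fun x' => Kt s' x' y) x - deriv (fun y' => Kt s' x y') y) s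
      = (1/4) * (x - y) * (x + y + 6 * s ^ 2) * Kt s x y := by
  have hAs : ContDiff ℝ (⊤ : ℕ∞) A := hA.of_le (by simp)
  have hcA : Continuous A := hAs.continuous
  have hA' : ContDiff ℝ (⊤ : ℕ∞) (deriv A) := (contDiff_infty_iff_deriv.mp hAs).2
  have hcA' : Continuous (deriv A) := hA'.continuous
  have hdA : ∀ z, HasDerivAt A (deriv A z) z := fun z =>
    (hAs.differentiable (by simp) z).hasDerivAt
  have hdA' : ∀ z, HasDerivAt (deriv A) (z * A z) z := fun z => by
    have := (hA'.differentiable (by simp) z).hasDerivAt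
    rwa [hAiry z] at this
  have rdA : RD A := fun c => by simpa using hLim c 0
  have rdA' : RD (deriv A) := fun c => by simpa using hLim' c 0
  have contSA : ∀ t : ℝ, Continuous fun l : ℝ => A (t + l) := fun t =>
    hcA.comp (continuous_const.add continuous_id)
  have contSA' : ∀ t : ℝ, Continuous fun l : ℝ => deriv A (t + l) := fun t =>
    hcA'.comp (continuous_const.add continuous_id)
  have tzA : ∀ t : ℝ, Tendsto (fun l : ℝ => A (t + l)) atTop (nhds 0) := fun t =>
    tendsto_zero_of_rd (rd_shift rdA t)
  have tzA' : ∀ t : ℝ, Tendsto (fun l : ℝ => deriv A (t + l)) atTop (nhds 0) := fun t =>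
    tendsto_zero_of_rd (rd_shift rdA' t)
  -- chains of derivatives in x and in y
  have chainX := airy_chain A hA hAiry rdA rdA' (fun l => A (y + l)) (contSA y)
    (rd_shift rdA y) (-2 * s) x
  have chainY := airy_chain A hA hAiry rdA rdA' (fun l => A (x + l)) (contSA x)
    (rd_shift rdA x) (-2 * s) y
  have funeqx : (fun x' => Kt s x' y)
      = fun x' => ∫ l in Ioi (0:ℝ), Real.exp (-2 * s * l) * (A (x' + l) * A (y + l)) :=
    funext fun x' => hKt s x' y
  have funeqy : (fun y' => Kt s x y')
      = fun y' => ∫ l in Ioi (0:ℝ), Real.exp (-2 * s * l) * (A (y' + l) * A (x + l)) :=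
    funext fun y' => by
      rw [hKt s x y']
      exact integral_congr_ae (Filter.Eventually.of_forall fun l => by ring)
  -- integrability of atoms
  have iA1 : IntegrableOn (fun l : ℝ => Real.exp (-2 * s * l) * (A (x + l) * A (y + l))) (Ioi (0:ℝ)) :=
    integrableOn_of_rd ((Real.continuous_exp.comp (continuous_const.mul continuous_id)).mul
      ((contSA x).mul (contSA y)))
      (rd_exp_mul (-2 * s) (rd_mul_tendsto (rd_shift rdA x) (tzA y)))
  have iA2 : IntegrableOn (fun l : ℝ => l * (Real.exp (-2 * s * l) * (A (x + l) * A (y + l)))) (Ioi (0:ℝ)) :=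
    integrableOn_of_rd (continuous_id.mul ((Real.continuous_exp.comp
      (continuous_const.mul continuous_id)).mul ((contSA x).mul (contSA y))))
      (rd_id_mul (rd_exp_mul (-2 * s) (rd_mul_tendsto (rd_shift rdA x) (tzA y))))
  have iA3 : IntegrableOn (fun l : ℝ => l * (l * (Real.exp (-2 * s * l) * (A (x + l) * A (y + l))))) (Ioi (0:ℝ)) :=
    integrableOn_of_rd (continuous_id.mul (continuous_id.mul ((Real.continuous_exp.comp
      (continuous_const.mul continuous_id)).mul ((contSA x).mul (contSA y)))))
      (rd_id_mul (rd_id_mul (rd_exp_mul (-2 * s) (rd_mul_tendsto (rd_shift rdA x) (tzA y)))))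
  have iB1 : IntegrableOn (fun l : ℝ => Real.exp (-2 * s * l) * (deriv A (x + l) * A (y + l))) (Ioi (0:ℝ)) :=
    integrableOn_of_rd ((Real.continuous_exp.comp (continuous_const.mul continuous_id)).mul
      ((contSA' x).mul (contSA y)))
      (rd_exp_mul (-2 * s) (rd_mul_tendsto (rd_shift rdA' x) (tzA y)))
  have iB2 : IntegrableOn (fun l : ℝ => Real.exp (-2 * s * l) * (deriv A (y + l) * A (x + l))) (Ioi (0:ℝ)) :=
    integrableOn_of_rd ((Real.continuous_exp.comp (continuous_const.mul continuous_id)).mul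
      ((contSA' y).mul (contSA x)))
      (rd_exp_mul (-2 * s) (rd_mul_tendsto (rd_shift rdA' y) (tzA x)))
  have iB3 : IntegrableOn (fun l : ℝ => l * (Real.exp (-2 * s * l) * (deriv A (x + l) * A (y + l)))) (Ioi (0:ℝ)) :=
    integrableOn_of_rd (continuous_id.mul ((Real.continuous_exp.comp
      (continuous_const.mul continuous_id)).mul ((contSA' x).mul (contSA y))))
      (rd_id_mul (rd_exp_mul (-2 * s) (rd_mul_tendsto (rd_shift rdA' x) (tzA y))))
  have iB4 : IntegrableOn (fun l : ℝ => l * (Real.exp (-2 * s * l) * (deriv A (y + l) * A (x + l)))) (Ioi (0:ℝ)) :=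
    integrableOn_of_rd (continuous_id.mul ((Real.continuous_exp.comp
      (continuous_const.mul continuous_id)).mul ((contSA' y).mul (contSA x))))
      (rd_id_mul (rd_exp_mul (-2 * s) (rd_mul_tendsto (rd_shift rdA' y) (tzA x))))
  -- first derivatives
  have hd1x : deriv (fun x' => Kt s x' y) x = (∫ l in Ioi (0:ℝ), Real.exp (-2 * s * l) * (deriv A (x + l) * A (y + l))) := by
    rw [funeqx]; exact chainX.1
  have hd1y : deriv (fun y' => Kt s x y') y = (∫ l in Ioi (0:ℝ), Real.exp (-2 * s * l) * (deriv A (y + l) * A (x + l))) := by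
    rw [funeqy]; exact chainY.1
  -- second derivatives, decomposed
  have Hd2x : iteratedDeriv 2 (fun x' => Kt s x' y) x = x * (∫ l in Ioi (0:ℝ), Real.exp (-2 * s * l) * (A (x + l) * A (y + l))) + (∫ l in Ioi (0:ℝ), l * (Real.exp (-2 * s * l) * (A (x + l) * A (y + l)))) := by
    rw [funeqx]
    have h := chainX.2.1
    rw [h, show (fun l : ℝ => Real.exp (-2 * s * l) * ((x + l) * A (x + l) * A (y + l)))
        = (fun l : ℝ => x * (Real.exp (-2 * s * l) * (A (x + l) * A (y + l))) + l * (Real.exp (-2 * s * l) * (A (x + l) * A (y + l)))) from funext fun l => by ring]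
    have j1 : Integrable (fun l : ℝ => x * (Real.exp (-2 * s * l) * (A (x + l) * A (y + l)))) (volume.restrict (Ioi 0)) :=
      iA1.const_mul x
    rw [integral_add j1 iA2, integral_const_mul]
  have Hd2y : iteratedDeriv 2 (fun y' => Kt s x y') y = y * (∫ l in Ioi (0:ℝ), Real.exp (-2 * s * l) * (A (x + l) * A (y + l))) + (∫ l in Ioi (0:ℝ), l * (Real.exp (-2 * s * l) * (A (x + l) * A (y + l)))) := by
    rw [funeqy]
    have h := chainY.2.1
    rw [h, show (fun l : ℝ => Real.exp (-2 * s * l) * ((y + l) * A (y + l) * A (x + l)))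
        = (fun l : ℝ => y * (Real.exp (-2 * s * l) * (A (x + l) * A (y + l))) + l * (Real.exp (-2 * s * l) * (A (x + l) * A (y + l)))) from funext fun l => by ring]
    have j1 : Integrable (fun l : ℝ => y * (Real.exp (-2 * s * l) * (A (x + l) * A (y + l)))) (volume.restrict (Ioi 0)) :=
      iA1.const_mul y
    rw [integral_add j1 iA2, integral_const_mul]
  -- third derivatives, decomposed
  have Hd3x : iteratedDeriv 3 (fun x' => Kt s x' y) x = (∫ l in Ioi (0:ℝ), Real.exp (-2 * s * l) * (A (x + l) * A (y + l))) + x * (∫ l in Ioi (0:ℝ), Real.exp (-2 * s * l) * (deriv A (x + l) * A (y + l))) + (∫ l in Ioi (0:ℝ), l * (Real.exp (-2 * s * l) * (deriv A (x + l) * A (y + l)))) := by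
    rw [funeqx]
    have h := chainX.2.2.1
    rw [h, show (fun l : ℝ => Real.exp (-2 * s * l) * ((A (x + l) + (x + l) * deriv A (x + l)) * A (y + l)))
        = (fun l : ℝ => (Real.exp (-2 * s * l) * (A (x + l) * A (y + l)) + x * (Real.exp (-2 * s * l) * (deriv A (x + l) * A (y + l)))) + l * (Real.exp (-2 * s * l) * (deriv A (x + l) * A (y + l)))) from funext fun l => by ring]
    have j1 : Integrable (fun l : ℝ => x * (Real.exp (-2 * s * l) * (deriv A (x + l) * A (y + l)))) (volume.restrict (Ioi 0)) :=
      iB1.const_mul x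
    have j2 : Integrable (fun l : ℝ => Real.exp (-2 * s * l) * (A (x + l) * A (y + l)) + x * (Real.exp (-2 * s * l) * (deriv A (x + l) * A (y + l)))) (volume.restrict (Ioi 0)) :=
      iA1.add j1
    rw [integral_add j2 iB3, integral_add iA1 j1, integral_const_mul]
  have Hd3y : iteratedDeriv 3 (fun y' => Kt s x y') y = (∫ l in Ioi (0:ℝ), Real.exp (-2 * s * l) * (A (x + l) * A (y + l))) + y * (∫ l in Ioi (0:ℝ), Real.exp (-2 * s * l) * (deriv A (y + l) * A (x + l))) + (∫ l in Ioi (0:ℝ), l * (Real.exp (-2 * s * l) * (deriv A (y + l) * A (x + l)))) := by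
    rw [funeqy]
    have h := chainY.2.2.1
    rw [h, show (fun l : ℝ => Real.exp (-2 * s * l) * ((A (y + l) + (y + l) * deriv A (y + l)) * A (x + l)))
        = (fun l : ℝ => (Real.exp (-2 * s * l) * (A (x + l) * A (y + l)) + y * (Real.exp (-2 * s * l) * (deriv A (y + l) * A (x + l)))) + l * (Real.exp (-2 * s * l) * (deriv A (y + l) * A (x + l)))) from funext fun l => by ring]
    have j1 : Integrable (fun l : ℝ => y * (Real.exp (-2 * s * l) * (deriv A (y + l) * A (x + l)))) (volume.restrict (Ioi 0)) :=
      iB2.const_mul y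
    have j2 : Integrable (fun l : ℝ => Real.exp (-2 * s * l) * (A (x + l) * A (y + l)) + y * (Real.exp (-2 * s * l) * (deriv A (y + l) * A (x + l)))) (volume.restrict (Ioi 0)) :=
      iA1.add j1
    rw [integral_add j2 iB4, integral_add iA1 j1, integral_const_mul]
  -- fourth derivatives, decomposed
  have Hd4x : iteratedDeriv 4 (fun x' => Kt s x' y) x
      = 2 * (∫ l in Ioi (0:ℝ), Real.exp (-2 * s * l) * (deriv A (x + l) * A (y + l))) + x ^ 2 * (∫ l in Ioi (0:ℝ), Real.exp (-2 * s * l) * (A (x + l) * A (y + l))) + 2 * x * (∫ l in Ioi (0:ℝ), l * (Real.exp (-2 * s * l) * (A (x + l) * A (y + l)))) + (∫ l in Ioi (0:ℝ), l * (l * (Real.exp (-2 * s * l) * (A (x + l) * A (y + l))))) := by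
    rw [funeqx]
    have h := chainX.2.2.2
    rw [h, show (fun l : ℝ => Real.exp (-2 * s * l) * ((2 * deriv A (x + l) + (x + l) * ((x + l) * A (x + l))) * A (y + l)))
        = (fun l : ℝ => ((2 * (Real.exp (-2 * s * l) * (deriv A (x + l) * A (y + l))) + x ^ 2 * (Real.exp (-2 * s * l) * (A (x + l) * A (y + l)))) + (2 * x) * (l * (Real.exp (-2 * s * l) * (A (x + l) * A (y + l))))) + l * (l * (Real.exp (-2 * s * l) * (A (x + l) * A (y + l)))))
        from funext fun l => by ring]
    have j1 : Integrable (fun l : ℝ => 2 * (Real.exp (-2 * s * l) * (deriv A (x + l) * A (y + l)))) (volume.restrict (Ioi 0)) :=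
      iB1.const_mul 2
    have j2 : Integrable (fun l : ℝ => x ^ 2 * (Real.exp (-2 * s * l) * (A (x + l) * A (y + l)))) (volume.restrict (Ioi 0)) :=
      iA1.const_mul _
    have j3 : Integrable (fun l : ℝ => (2 * x) * (l * (Real.exp (-2 * s * l) * (A (x + l) * A (y + l))))) (volume.restrict (Ioi 0)) :=
      iA2.const_mul _
    have j12 : Integrable (fun l : ℝ => 2 * (Real.exp (-2 * s * l) * (deriv A (x + l) * A (y + l))) + x ^ 2 * (Real.exp (-2 * s * l) * (A (x + l) * A (y + l))))
      (volume.restrict (Ioi 0)) := j1.add j2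
    have j123 : Integrable (fun l : ℝ => (2 * (Real.exp (-2 * s * l) * (deriv A (x + l) * A (y + l))) + x ^ 2 * (Real.exp (-2 * s * l) * (A (x + l) * A (y + l)))) + (2 * x) * (l * (Real.exp (-2 * s * l) * (A (x + l) * A (y + l)))))
      (volume.restrict (Ioi 0)) := j12.add j3
    rw [integral_add j123 iA3, integral_add j12 j3, integral_add j1 j2,
      integral_const_mul, integral_const_mul, integral_const_mul]
  have Hd4y : iteratedDeriv 4 (fun y' => Kt s x y') y
      = 2 * (∫ l in Ioi (0:ℝ), Real.exp (-2 * s * l) * (deriv A (y + l) * A (x + l))) + y ^ 2 * (∫ l in Ioi (0:ℝ), Real.exp (-2 * s * l) * (A (x + l) * A (y + l))) + 2 * y * (∫ l in Ioi (0:ℝ), l * (Real.exp (-2 * s * l) * (A (x + l) * A (y + l)))) + (∫ l in Ioi (0:ℝ), l * (l * (Real.exp (-2 * s * l) * (A (x + l) * A (y + l))))) := by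
    rw [funeqy]
    have h := chainY.2.2.2
    rw [h, show (fun l : ℝ => Real.exp (-2 * s * l) * ((2 * deriv A (y + l) + (y + l) * ((y + l) * A (y + l))) * A (x + l)))
        = (fun l : ℝ => ((2 * (Real.exp (-2 * s * l) * (deriv A (y + l) * A (x + l))) + y ^ 2 * (Real.exp (-2 * s * l) * (A (x + l) * A (y + l)))) + (2 * y) * (l * (Real.exp (-2 * s * l) * (A (x + l) * A (y + l))))) + l * (l * (Real.exp (-2 * s * l) * (A (x + l) * A (y + l)))))
        from funext fun l => by ring]
    have j1 : Integrable (fun l : ℝ => 2 * (Real.exp (-2 * s * l) * (deriv A (y + l) * A (x + l)))) (volume.restrict (Ioi 0)) :=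
      iB2.const_mul 2
    have j2 : Integrable (fun l : ℝ => y ^ 2 * (Real.exp (-2 * s * l) * (A (x + l) * A (y + l)))) (volume.restrict (Ioi 0)) :=
      iA1.const_mul _
    have j3 : Integrable (fun l : ℝ => (2 * y) * (l * (Real.exp (-2 * s * l) * (A (x + l) * A (y + l))))) (volume.restrict (Ioi 0)) :=
      iA2.const_mul _
    have j12 : Integrable (fun l : ℝ => 2 * (Real.exp (-2 * s * l) * (deriv A (y + l) * A (x + l))) + y ^ 2 * (Real.exp (-2 * s * l) * (A (x + l) * A (y + l))))
      (volume.restrict (Ioi 0)) := j1.add j2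
    have j123 : Integrable (fun l : ℝ => (2 * (Real.exp (-2 * s * l) * (deriv A (y + l) * A (x + l))) + y ^ 2 * (Real.exp (-2 * s * l) * (A (x + l) * A (y + l)))) + (2 * y) * (l * (Real.exp (-2 * s * l) * (A (x + l) * A (y + l)))))
      (volume.restrict (Ioi 0)) := j12.add j3
    rw [integral_add j123 iA3, integral_add j12 j3, integral_add j1 j2,
      integral_const_mul, integral_const_mul, integral_const_mul]
  -- derivative in s
  have hsx : ∀ t : ℝ, deriv (fun x' => Kt t x' y) x
      = ∫ l in Ioi (0:ℝ), Real.exp (-2 * t * l) * (deriv A (x + l) * A (y + l)) := fun t => by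
    have funeq : (fun x' => Kt t x' y)
        = fun x' => ∫ l in Ioi (0:ℝ), Real.exp (-2 * t * l) * (A (x' + l) * A (y + l)) :=
      funext fun x' => hKt t x' y
    rw [funeq]
    exact (airy_chain A hA hAiry rdA rdA' (fun l => A (y + l)) (contSA y)
      (rd_shift rdA y) (-2 * t) x).1
  have hsy : ∀ t : ℝ, deriv (fun y' => Kt t x y') y
      = ∫ l in Ioi (0:ℝ), Real.exp (-2 * t * l) * (deriv A (y + l) * A (x + l)) := fun t => by
    have funeq : (fun y' => Kt t x y')
        = fun y' => ∫ l in Ioi (0:ℝ), Real.exp (-2 * t * l) * (A (y' + l) * A (x + l)) :=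
      funext fun y' => by
        rw [hKt t x y']
        exact integral_congr_ae (Filter.Eventually.of_forall fun l => by ring)
    rw [funeq]
    exact (airy_chain A hA hAiry rdA rdA' (fun l => A (x + l)) (contSA x)
      (rd_shift rdA x) (-2 * t) y).1
  have hsfun : (fun s' => deriv (fun x' => Kt s' x' y) x - deriv (fun y' => Kt s' x y') y)
      = fun s' => (∫ l in Ioi (0:ℝ), Real.exp (-2 * s' * l) * (deriv A (x + l) * A (y + l)))
        - (∫ l in Ioi (0:ℝ), Real.exp (-2 * s' * l) * (deriv A (y + l) * A (x + l))) :=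
    funext fun s' => by rw [hsx s', hsy s']
  have hS1 : HasDerivAt
      (fun t => ∫ l in Ioi (0:ℝ), Real.exp (-2 * t * l) * (deriv A (x + l) * A (y + l)))
      (∫ l in Ioi (0:ℝ), -2 * l * Real.exp (-2 * s * l) * (deriv A (x + l) * A (y + l))) s :=
    keyS (fun l => deriv A (x + l) * A (y + l)) ((contSA' x).mul (contSA y))
      (rd_mul_tendsto (rd_shift rdA' x) (tzA y)) s
  have hS2 : HasDerivAt
      (fun t => ∫ l in Ioi (0:ℝ), Real.exp (-2 * t * l) * (deriv A (y + l) * A (x + l)))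
      (∫ l in Ioi (0:ℝ), -2 * l * Real.exp (-2 * s * l) * (deriv A (y + l) * A (x + l))) s :=
    keyS (fun l => deriv A (y + l) * A (x + l)) ((contSA' y).mul (contSA x))
      (rd_mul_tendsto (rd_shift rdA' y) (tzA x)) s
  have Hds : deriv (fun s' => deriv (fun x' => Kt s' x' y) x - deriv (fun y' => Kt s' x y') y) s
      = (-2) * (∫ l in Ioi (0:ℝ), l * (Real.exp (-2 * s * l) * (deriv A (x + l) * A (y + l)))) - (-2) * (∫ l in Ioi (0:ℝ), l * (Real.exp (-2 * s * l) * (deriv A (y + l) * A (x + l)))) := by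
    rw [hsfun, HasDerivAt.deriv (f := fun t => (∫ l in Ioi (0:ℝ), Real.exp (-2 * t * l) * (deriv A (x + l) * A (y + l))) - ∫ l in Ioi (0:ℝ), Real.exp (-2 * t * l) * (deriv A (y + l) * A (x + l))) (hS1.sub hS2)]
    rw [show (fun l : ℝ => -2 * l * Real.exp (-2 * s * l) * (deriv A (x + l) * A (y + l))) = (fun l : ℝ => (-2) * (l * (Real.exp (-2 * s * l) * (deriv A (x + l) * A (y + l))))) from funext fun l => by ring,
      show (fun l : ℝ => -2 * l * Real.exp (-2 * s * l) * (deriv A (y + l) * A (x + l))) = (fun l : ℝ => (-2) * (l * (Real.exp (-2 * s * l) * (deriv A (y + l) * A (x + l))))) from funext fun l => by ring,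
      integral_const_mul, integral_const_mul]
  -- the FTC identity
  have hGd : ∀ l : ℝ, HasDerivAt (fun l : ℝ => deriv A (x + l) * A (y + l) - A (x + l) * deriv A (y + l))
      ((x - y) * (A (x + l) * A (y + l))) l := fun l => by
    have p1 : HasDerivAt (fun l : ℝ => deriv A (x + l)) ((x + l) * A (x + l)) l :=
      HasDerivAt.comp_const_add x l (hdA' (x + l))
    have p2 : HasDerivAt (fun l : ℝ => A (y + l)) (deriv A (y + l)) l :=
      HasDerivAt.comp_const_add y l (hdA (y + l))
    have p3 : HasDerivAt (fun l : ℝ => A (x + l)) (deriv A (x + l)) l :=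
      HasDerivAt.comp_const_add x l (hdA (x + l))
    have p4 : HasDerivAt (fun l : ℝ => deriv A (y + l)) ((y + l) * A (y + l)) l :=
      HasDerivAt.comp_const_add y l (hdA' (y + l))
    have := (p1.mul p2).sub (p3.mul p4)
    refine this.congr_deriv ?_
    ring
  have hEd : ∀ l : ℝ, HasDerivAt (fun l : ℝ => Real.exp (-2 * s * l))
      (-2 * s * Real.exp (-2 * s * l)) l := fun l => by
    have h0 : HasDerivAt (fun l : ℝ => -2 * s * l) (-2 * s) l := by
      simpa using (hasDerivAt_id l).const_mul (-2 * s)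
    have := h0.exp
    convert this using 1
    ring
  have hfd : ∀ l : ℝ, HasDerivAt (fun l : ℝ => (1/2) * (l * (Real.exp (-2 * s * l) * (deriv A (x + l) * A (y + l) - A (x + l) * deriv A (y + l))))) ((1/2) * (Real.exp (-2 * s * l) * (deriv A (x + l) * A (y + l))) + (-(1/2)) * (Real.exp (-2 * s * l) * (deriv A (y + l) * A (x + l))) + (-s) * (l * (Real.exp (-2 * s * l) * (deriv A (x + l) * A (y + l)))) + s * (l * (Real.exp (-2 * s * l) * (deriv A (y + l) * A (x + l)))) + ((1/2)*(x-y)) * (l * (Real.exp (-2 * s * l) * (A (x + l) * A (y + l))))) l := fun l => by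
    have := ((hasDerivAt_id l).mul ((hEd l).mul (hGd l))).const_mul (1/2 : ℝ)
    refine this.congr_deriv ?_
    simp only [id_eq, one_mul, Pi.mul_apply]
    ring
  have k1 : Integrable (fun l : ℝ => (1/2) * (Real.exp (-2 * s * l) * (deriv A (x + l) * A (y + l)))) (volume.restrict (Ioi 0)) :=
    iB1.const_mul _
  have k2 : Integrable (fun l : ℝ => (-(1/2)) * (Real.exp (-2 * s * l) * (deriv A (y + l) * A (x + l)))) (volume.restrict (Ioi 0)) :=
    iB2.const_mul _
  have k3 : Integrable (fun l : ℝ => (-s) * (l * (Real.exp (-2 * s * l) * (deriv A (x + l) * A (y + l))))) (volume.restrict (Ioi 0)) :=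
    iB3.const_mul _
  have k4 : Integrable (fun l : ℝ => s * (l * (Real.exp (-2 * s * l) * (deriv A (y + l) * A (x + l))))) (volume.restrict (Ioi 0)) :=
    iB4.const_mul _
  have k5 : Integrable (fun l : ℝ => ((1/2)*(x-y)) * (l * (Real.exp (-2 * s * l) * (A (x + l) * A (y + l))))) (volume.restrict (Ioi 0)) :=
    iA2.const_mul _
  have k12 : Integrable (fun l : ℝ => (1/2) * (Real.exp (-2 * s * l) * (deriv A (x + l) * A (y + l))) + (-(1/2)) * (Real.exp (-2 * s * l) * (deriv A (y + l) * A (x + l))))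
    (volume.restrict (Ioi 0)) := k1.add k2
  have k123 : Integrable (fun l : ℝ => (1/2) * (Real.exp (-2 * s * l) * (deriv A (x + l) * A (y + l))) + (-(1/2)) * (Real.exp (-2 * s * l) * (deriv A (y + l) * A (x + l))) + (-s) * (l * (Real.exp (-2 * s * l) * (deriv A (x + l) * A (y + l)))))
    (volume.restrict (Ioi 0)) := k12.add k3
  have k1234 : Integrable (fun l : ℝ => (1/2) * (Real.exp (-2 * s * l) * (deriv A (x + l) * A (y + l))) + (-(1/2)) * (Real.exp (-2 * s * l) * (deriv A (y + l) * A (x + l))) + (-s) * (l * (Real.exp (-2 * s * l) * (deriv A (x + l) * A (y + l))))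
    + s * (l * (Real.exp (-2 * s * l) * (deriv A (y + l) * A (x + l))))) (volume.restrict (Ioi 0)) := k123.add k4
  have k12345 : Integrable (fun l : ℝ => (1/2) * (Real.exp (-2 * s * l) * (deriv A (x + l) * A (y + l))) + (-(1/2)) * (Real.exp (-2 * s * l) * (deriv A (y + l) * A (x + l))) + (-s) * (l * (Real.exp (-2 * s * l) * (deriv A (x + l) * A (y + l)))) + s * (l * (Real.exp (-2 * s * l) * (deriv A (y + l) * A (x + l)))) + ((1/2)*(x-y)) * (l * (Real.exp (-2 * s * l) * (A (x + l) * A (y + l))))) (volume.restrict (Ioi 0)) := k1234.add k5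
  have htend : Tendsto (fun l : ℝ => (1/2) * (l * (Real.exp (-2 * s * l) * (deriv A (x + l) * A (y + l) - A (x + l) * deriv A (y + l))))) atTop (nhds 0) := by
    refine tendsto_zero_of_rd (rd_const_mul _ (rd_id_mul (rd_exp_mul (-2 * s) ?_)))
    exact rd_sub (rd_mul_tendsto (rd_shift rdA' x) (tzA y))
      (rd_mul_tendsto (rd_shift rdA x) (tzA' y))
  have R0 : (∫ l in Ioi (0:ℝ), (1/2) * (Real.exp (-2 * s * l) * (deriv A (x + l) * A (y + l))) + (-(1/2)) * (Real.exp (-2 * s * l) * (deriv A (y + l) * A (x + l))) + (-s) * (l * (Real.exp (-2 * s * l) * (deriv A (x + l) * A (y + l)))) + s * (l * (Real.exp (-2 * s * l) * (deriv A (y + l) * A (x + l)))) + ((1/2)*(x-y)) * (l * (Real.exp (-2 * s * l) * (A (x + l) * A (y + l))))) = 0 := by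
    have h := integral_Ioi_of_hasDerivAt_of_tendsto' (a := 0)
      (f := fun l : ℝ => (1/2) * (l * (Real.exp (-2 * s * l) * (deriv A (x + l) * A (y + l) - A (x + l) * deriv A (y + l))))) (f' := fun l : ℝ => (1/2) * (Real.exp (-2 * s * l) * (deriv A (x + l) * A (y + l))) + (-(1/2)) * (Real.exp (-2 * s * l) * (deriv A (y + l) * A (x + l))) + (-s) * (l * (Real.exp (-2 * s * l) * (deriv A (x + l) * A (y + l)))) + s * (l * (Real.exp (-2 * s * l) * (deriv A (y + l) * A (x + l)))) + ((1/2)*(x-y)) * (l * (Real.exp (-2 * s * l) * (A (x + l) * A (y + l)))))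
      (fun l _ => hfd l) k12345 htend
    rw [h]
    norm_num
  have R : (1/2) * (∫ l in Ioi (0:ℝ), Real.exp (-2 * s * l) * (deriv A (x + l) * A (y + l))) + (-(1/2)) * (∫ l in Ioi (0:ℝ), Real.exp (-2 * s * l) * (deriv A (y + l) * A (x + l))) + (-s) * (∫ l in Ioi (0:ℝ), l * (Real.exp (-2 * s * l) * (deriv A (x + l) * A (y + l)))) + s * (∫ l in Ioi (0:ℝ), l * (Real.exp (-2 * s * l) * (deriv A (y + l) * A (x + l))))
      + ((1/2)*(x-y)) * (∫ l in Ioi (0:ℝ), l * (Real.exp (-2 * s * l) * (A (x + l) * A (y + l)))) = 0 := by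
    rw [← integral_const_mul, ← integral_const_mul, ← integral_const_mul, ← integral_const_mul,
      ← integral_const_mul, ← integral_add k1 k2, ← integral_add k12 k3,
      ← integral_add k123 k4, ← integral_add k1234 k5]
    exact R0
  have hKt0 : Kt s x y = (∫ l in Ioi (0:ℝ), Real.exp (-2 * s * l) * (A (x + l) * A (y + l))) := hKt s x y
  rw [Hd4x, Hd4y, Hd2x, Hd2y, hd1x, hd1y, Hd3x, Hd3y, Hds, hKt0]
  linear_combination R
end

section
/- Let Q : ℝ⁶ → ℝ be infinitely differentiable in the variables (τ₁,τ₂,a₁,b₁,a₂,b₂) and suppose Q satisfies the Pearcey partial differential equation at every point: 2∂_τ³Q + ¼(2ε_τ + ε_E − 2)∂_E²Q − (τ₁∂_{E₁} + τ₂∂_{E₂})∂_τ∂_E Q + (∂_E(∂_τ∂_E Q))·(∂_E²Q) − (∂_τ∂_E Q)·(∂_E(∂_E²Q)) = 0. Define T : ℝ⁶ → ℝ⁶ by T(τ,σ,ξ,η,μ,ν) := (τ+σ, τ−σ, ξ+η+μ, ξ+η−μ, ξ−η+ν, ξ−η−ν) and F := Q ∘ T. Then F satisfies at every point (τ,σ,ξ,η,μ,ν):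 2·∂³F/∂τ³ + ¼(2(σ·∂F_{ξξ}/∂σ − τ·∂F_{ξξ}/∂τ) + ξ·∂F_{ξξ}/∂ξ + η·∂F_{ξξ}/∂η + μ·∂F_{ξξ}/∂μ + ν·∂F_{ξξ}/∂ν − 2·F_{ξξ}) − σ·∂³F/(∂τ∂ξ∂η) + F_{τξξ}·F_{ξξ} − F_{τξ}·F_{ξξξ} = 0, where F_{ξξ} := ∂²F/∂ξ², F_{τξ} := ∂²F/(∂τ∂ξ), F_{τξξ} := ∂³F/(∂τ∂ξ²), F_{ξξξ} := ∂³F/∂ξ³. -/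
/-- The space of the six real variables. -/
abbrev E6 : Type := ℝ × ℝ × ℝ × ℝ × ℝ × ℝ

/-- Directional derivative operator: `Dv v f p` is the derivative of `f` at `p`
in the (constant) direction `v`. -/
noncomputable def Dv (v : E6) (f : E6 → ℝ) : E6 → ℝ := fun p => fderiv ℝ f p v

/-- The direction of the operator `∂_τ = ∂/∂τ₁ + ∂/∂τ₂`. -/
def eτ : E6 := (1, 1, 0, 0, 0, 0)

/-- The direction of the operator `∂_E = ∂/∂a₁ + ∂/∂b₁ + ∂/∂a₂ + ∂/∂b₂`. -/
def eE : E6 := (0, 0, 1, 1, 1, 1)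

/-- The change of variables
`T(τ,σ,ξ,η,μ,ν) = (τ+σ, τ−σ, ξ+η+μ, ξ+η−μ, ξ−η+ν, ξ−η−ν)`. -/
def T6 : E6 → E6 := fun p =>
  (p.1 + p.2.1, p.1 - p.2.1,
   p.2.2.1 + p.2.2.2.1 + p.2.2.2.2.1, p.2.2.1 + p.2.2.2.1 - p.2.2.2.2.1,
   p.2.2.1 - p.2.2.2.1 + p.2.2.2.2.2, p.2.2.1 - p.2.2.2.1 - p.2.2.2.2.2)


open scoped ContDiff

section PearceyAux

lemma contDiff_Dv {f : E6 → ℝ} (hf : ContDiff ℝ ∞ f) (v : E6) :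
    ContDiff ℝ ∞ (Dv v f) :=
  (ContinuousLinearMap.apply ℝ ℝ v).contDiff.comp (contDiff_infty_iff_fderiv.mp hf).2

lemma Dv_Dv {f : E6 → ℝ} (hf : ContDiff ℝ ∞ f) (v w : E6) (p : E6) :
    Dv v (Dv w f) p = fderiv ℝ (fderiv ℝ f) p v w := by
  have hd' : Differentiable ℝ (fderiv ℝ f) :=
    ((contDiff_infty_iff_fderiv.mp hf).2).differentiable (by norm_num)
  have h : HasFDerivAt (Dv w f)
      ((ContinuousLinearMap.apply ℝ ℝ w).comp (fderiv ℝ (fderiv ℝ f) p)) p :=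
    ((ContinuousLinearMap.apply ℝ ℝ w).hasFDerivAt).comp p (hd' p).hasFDerivAt
  simp [Dv, h.fderiv]

lemma Dv_comm {f : E6 → ℝ} (hf : ContDiff ℝ ∞ f) (v w : E6) :
    Dv v (Dv w f) = Dv w (Dv v f) := by
  funext p
  have hd : Differentiable ℝ f := hf.differentiable (by norm_num)
  have hd' : Differentiable ℝ (fderiv ℝ f) :=
    ((contDiff_infty_iff_fderiv.mp hf).2).differentiable (by norm_num)
  rw [Dv_Dv hf v w p, Dv_Dv hf w v p]
  exact second_derivative_symmetric (fun y => (hd y).hasFDerivAt) (hd' p).hasFDerivAt v w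

def T6lin : E6 →ₗ[ℝ] E6 where
  toFun := T6
  map_add' := by
    intro x y
    simp only [T6, Prod.fst_add, Prod.snd_add, Prod.mk_add_mk]
    refine Prod.ext ?_ (Prod.ext ?_ (Prod.ext ?_ (Prod.ext ?_ (Prod.ext ?_ ?_)))) <;>
      dsimp <;> ring
  map_smul' := by
    intro c x
    simp only [T6, Prod.smul_fst, Prod.smul_snd, Prod.smul_mk, RingHom.id_apply,
      smul_eq_mul]
    refine Prod.ext ?_ (Prod.ext ?_ (Prod.ext ?_ (Prod.ext ?_ (Prod.ext ?_ ?_)))) <;>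
      dsimp <;> ring

noncomputable def T6clm : E6 →L[ℝ] E6 := T6lin.toContinuousLinearMap

lemma T6_hasFDerivAt (p : E6) : HasFDerivAt T6 T6clm p := T6clm.hasFDerivAt

lemma Dv_comp_T6 {f : E6 → ℝ} (hf : Differentiable ℝ f) (v : E6) :
    Dv v (f ∘ T6) = (Dv (T6 v) f) ∘ T6 := by
  funext p
  have h : HasFDerivAt (f ∘ T6) ((fderiv ℝ f (T6 p)).comp T6clm) p :=
    ((hf (T6 p)).hasFDerivAt).comp p (T6_hasFDerivAt p)
  simp only [Dv, Function.comp_apply, h.fderiv, ContinuousLinearMap.coe_comp']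
  rfl

lemma Dv_smul (c : ℝ) (v : E6) (f : E6 → ℝ) (p : E6) :
    Dv (c • v) f p = c * Dv v f p := by simp [Dv]

lemma Dv_add (v w : E6) (f : E6 → ℝ) (p : E6) :
    Dv (v + w) f p = Dv v f p + Dv w f p := by simp [Dv]

end PearceyAux

/-- if a smooth `Q(τ₁,τ₂,a₁,b₁,a₂,b₂)` satisfies the Pearcey PDE
`2∂_τ³Q + ¼(2ε_τ + ε_E − 2)∂_E²Q − (τ₁∂_{E₁} + τ₂∂_{E₂})∂_τ∂_E Q
  + {∂_τ∂_E Q, ∂_E²Q}_{∂_E} = 0`,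
then `F = Q ∘ T` satisfies the corresponding PDE in the variables `(τ,σ,ξ,η,μ,ν)`. -/


theorem pearcey_pde_change_of_variables
    (Q : E6 → ℝ) (hQ : ContDiff ℝ (⊤ : ℕ∞) Q)
    (hPDE : ∀ p : E6,
      2 * Dv eτ (Dv eτ (Dv eτ Q)) p
        + (1/4) * (2 * fderiv ℝ (Dv eE (Dv eE Q)) p (p.1, p.2.1, 0, 0, 0, 0)
            + fderiv ℝ (Dv eE (Dv eE Q)) p
                (0, 0, p.2.2.1, p.2.2.2.1, p.2.2.2.2.1, p.2.2.2.2.2)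
            - 2 * Dv eE (Dv eE Q) p)
        - fderiv ℝ (Dv eτ (Dv eE Q)) p (0, 0, p.1, p.1, p.2.1, p.2.1)
        + Dv eE (Dv eτ (Dv eE Q)) p * Dv eE (Dv eE Q) p
        - Dv eτ (Dv eE Q) p * Dv eE (Dv eE (Dv eE Q)) p = 0)
    (F : E6 → ℝ) (hF : F = Q ∘ T6) :
    ∀ τ σ ξ η μ ν : ℝ,
      2 * Dv (1, 0, 0, 0, 0, 0) (Dv (1, 0, 0, 0, 0, 0) (Dv (1, 0, 0, 0, 0, 0) F))
          (τ, σ, ξ, η, μ, ν)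
        + (1/4) *
            (2 * (σ * Dv (0, 1, 0, 0, 0, 0)
                    (Dv (0, 0, 1, 0, 0, 0) (Dv (0, 0, 1, 0, 0, 0) F)) (τ, σ, ξ, η, μ, ν)
                  - τ * Dv (1, 0, 0, 0, 0, 0)
                      (Dv (0, 0, 1, 0, 0, 0) (Dv (0, 0, 1, 0, 0, 0) F)) (τ, σ, ξ, η, μ, ν))
              + ξ * Dv (0, 0, 1, 0, 0, 0)
                  (Dv (0, 0, 1, 0, 0, 0) (Dv (0, 0, 1, 0, 0, 0) F)) (τ, σ, ξ, η, μ, ν)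
              + η * Dv (0, 0, 0, 1, 0, 0)
                  (Dv (0, 0, 1, 0, 0, 0) (Dv (0, 0, 1, 0, 0, 0) F)) (τ, σ, ξ, η, μ, ν)
              + μ * Dv (0, 0, 0, 0, 1, 0)
                  (Dv (0, 0, 1, 0, 0, 0) (Dv (0, 0, 1, 0, 0, 0) F)) (τ, σ, ξ, η, μ, ν)
              + ν * Dv (0, 0, 0, 0, 0, 1)
                  (Dv (0, 0, 1, 0, 0, 0) (Dv (0, 0, 1, 0, 0, 0) F)) (τ, σ, ξ, η, μ, ν)
              - 2 * Dv (0, 0, 1, 0, 0, 0) (Dv (0, 0, 1, 0, 0, 0) F) (τ, σ, ξ, η, μ, ν))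
        - σ * Dv (1, 0, 0, 0, 0, 0)
            (Dv (0, 0, 1, 0, 0, 0) (Dv (0, 0, 0, 1, 0, 0) F)) (τ, σ, ξ, η, μ, ν)
        + Dv (1, 0, 0, 0, 0, 0)
              (Dv (0, 0, 1, 0, 0, 0) (Dv (0, 0, 1, 0, 0, 0) F)) (τ, σ, ξ, η, μ, ν)
            * Dv (0, 0, 1, 0, 0, 0) (Dv (0, 0, 1, 0, 0, 0) F) (τ, σ, ξ, η, μ, ν)
        - Dv (1, 0, 0, 0, 0, 0) (Dv (0, 0, 1, 0, 0, 0) F) (τ, σ, ξ, η, μ, ν)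
            * Dv (0, 0, 1, 0, 0, 0)
                (Dv (0, 0, 1, 0, 0, 0) (Dv (0, 0, 1, 0, 0, 0) F)) (τ, σ, ξ, η, μ, ν)
        = 0 := by
  subst hF
  intro τ σ ξ η μ ν
  have hQ' : ContDiff ℝ ∞ Q := hQ.of_le (by simp)
  have d0 : Differentiable ℝ Q := hQ'.differentiable (by norm_num)
  have c1 : ∀ v, ContDiff ℝ ∞ (Dv v Q) := fun v => contDiff_Dv hQ' v
  have c2 : ∀ v w, ContDiff ℝ ∞ (Dv v (Dv w Q)) := fun v w => contDiff_Dv (c1 w) v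
  have r1 : ∀ v, Dv v (Q ∘ T6) = (Dv (T6 v) Q) ∘ T6 := fun v => Dv_comp_T6 d0 v
  have r2 : ∀ v w, Dv v ((Dv w Q) ∘ T6) = (Dv (T6 v) (Dv w Q)) ∘ T6 :=
    fun v w => Dv_comp_T6 ((c1 w).differentiable (by norm_num)) v
  have r3 : ∀ v w u, Dv v ((Dv w (Dv u Q)) ∘ T6) = (Dv (T6 v) (Dv w (Dv u Q))) ∘ T6 :=
    fun v w u => Dv_comp_T6 ((c2 w u).differentiable (by norm_num)) v
  simp only [r1, r2, r3, Function.comp_apply]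
  have t1 : T6 ((1, 0, 0, 0, 0, 0) : E6) = eτ := by norm_num [T6, eτ]
  have t2 : T6 ((0, 1, 0, 0, 0, 0) : E6) = ((1, -1, 0, 0, 0, 0) : E6) := by norm_num [T6]
  have t3 : T6 ((0, 0, 1, 0, 0, 0) : E6) = eE := by norm_num [T6, eE]
  have t4 : T6 ((0, 0, 0, 1, 0, 0) : E6) = ((0, 0, 1, 1, -1, -1) : E6) := by norm_num [T6]
  have t5 : T6 ((0, 0, 0, 0, 1, 0) : E6) = ((0, 0, 1, -1, 0, 0) : E6) := by norm_num [T6]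
  have t6 : T6 ((0, 0, 0, 0, 0, 1) : E6) = ((0, 0, 0, 0, 1, -1) : E6) := by norm_num [T6]
  simp only [t1, t2, t3, t4, t5, t6]
  set q : E6 := T6 (τ, σ, ξ, η, μ, ν) with hqdef
  have hq := hPDE q
  have hv1 : ((q.1, q.2.1, 0, 0, 0, 0) : E6)
      = τ • eτ + σ • (((1, -1, 0, 0, 0, 0)) : E6) := by
    simp only [hqdef, T6, eτ, Prod.smul_mk, Prod.mk_add_mk, smul_eq_mul, Prod.mk.injEq]
    norm_num
    and_intros <;> ring
  have hv2 : ((0, 0, q.2.2.1, q.2.2.2.1, q.2.2.2.2.1, q.2.2.2.2.2) : E6)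
      = ξ • eE + η • (((0, 0, 1, 1, -1, -1)) : E6)
        + μ • (((0, 0, 1, -1, 0, 0)) : E6) + ν • (((0, 0, 0, 0, 1, -1)) : E6) := by
    simp only [hqdef, T6, eE, Prod.smul_mk, Prod.mk_add_mk, smul_eq_mul, Prod.mk.injEq]
    norm_num
    and_intros <;> ring
  have hv3 : ((0, 0, q.1, q.1, q.2.1, q.2.1) : E6)
      = τ • eE + σ • (((0, 0, 1, 1, -1, -1)) : E6) := by
    simp only [hqdef, T6, eE, Prod.smul_mk, Prod.mk_add_mk, smul_eq_mul, Prod.mk.injEq]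
    norm_num
    and_intros <;> ring
  have sA : fderiv ℝ (Dv eE (Dv eE Q)) q (q.1, q.2.1, 0, 0, 0, 0)
      = τ * Dv eτ (Dv eE (Dv eE Q)) q
        + σ * Dv ((1, -1, 0, 0, 0, 0) : E6) (Dv eE (Dv eE Q)) q := by
    show Dv _ _ q = _
    rw [hv1, Dv_add, Dv_smul, Dv_smul]
  have sB : fderiv ℝ (Dv eE (Dv eE Q)) q
        (0, 0, q.2.2.1, q.2.2.2.1, q.2.2.2.2.1, q.2.2.2.2.2)
      = ξ * Dv eE (Dv eE (Dv eE Q)) q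
        + η * Dv ((0, 0, 1, 1, -1, -1) : E6) (Dv eE (Dv eE Q)) q
        + μ * Dv ((0, 0, 1, -1, 0, 0) : E6) (Dv eE (Dv eE Q)) q
        + ν * Dv ((0, 0, 0, 0, 1, -1) : E6) (Dv eE (Dv eE Q)) q := by
    show Dv _ _ q = _
    rw [hv2, Dv_add, Dv_add, Dv_add, Dv_smul, Dv_smul, Dv_smul, Dv_smul]
  have sC : fderiv ℝ (Dv eτ (Dv eE Q)) q (0, 0, q.1, q.1, q.2.1, q.2.1)
      = τ * Dv eE (Dv eτ (Dv eE Q)) q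
        + σ * Dv ((0, 0, 1, 1, -1, -1) : E6) (Dv eτ (Dv eE Q)) q := by
    show Dv _ _ q = _
    rw [hv3, Dv_add, Dv_smul, Dv_smul]
  have comm1 : Dv eE (Dv eτ (Dv eE Q)) = Dv eτ (Dv eE (Dv eE Q)) :=
    Dv_comm (c1 eE) eE eτ
  have comm2 : Dv ((0, 0, 1, 1, -1, -1) : E6) (Dv eτ (Dv eE Q))
      = Dv eτ (Dv eE (Dv ((0, 0, 1, 1, -1, -1) : E6) Q)) := by
    rw [Dv_comm (c1 eE) ((0, 0, 1, 1, -1, -1) : E6) eτ,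
      Dv_comm hQ' ((0, 0, 1, 1, -1, -1) : E6) eE]
  rw [sA, sB, sC, comm1, comm2] at hq
  linear_combination hq
end

section
/- Let u₁ < u₂ be real numbers, and for z > 0 define τ₁(z) := 1/(3z⁶) + 2u₁/z² + 2u₁²·z² and τ₂(z) := 1/(3z⁶) + 2u₂/z² + 2u₂²·z². Then, as z → 0⁺, (τ₂(z) − τ₁(z))/(2(u₂ − u₁)) − (3τ₁(z))^{1/3} − (u₂ − u₁)/(3τ₁(z))^{1/3} − 2u₁u₂/(3τ₁(z)) = O(z¹⁰); equivalently, this difference is O(τ₁(z)^{−5/3}). (This is the time-calibration relation (τ₂−τ₁)/(2(t₂−t₁)) = (3τ₁)^{1/3} + (t₂−t₁)/(3τ₁)^{1/3} + 2t₁t₂/(3τ₁) + O(τ₁^{−5/3}) of Theorem 1.1.) -/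
/-!
Put `w = 1 + 6u₁z⁴ + 6u₁²z⁸`, so that `3τ₁ = w / z⁶` and `(3τ₁)^{1/3} = r / z²` with
`r = w^{1/3}`. Clearing denominators, the error term becomes `N / (z² r³)` with `N` a
polynomial in `z` and `r`. If `r` is replaced by its Taylor polynomial
`a = 1 + 2u₁z⁴ − 2u₁²z⁸`, then `N` becomes divisible by `z¹²`; and
`r − a = (r³ − a³) / (r² + ra + a²) = O(z¹²)` because `r³ − a³ = w − a³` is. Hence
`N = O(z¹²)` and the error is `O(z¹⁰)`. Finally `z¹⁰ = O(τ₁^{−5/3})`, since `z⁶ τ₁ → 1/3`.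
-/

open Filter Set Asymptotics Topology

theorem Asymptotics.IsBigO.mul_of_tendsto {α : Type*} {l : Filter α} {f g k : α → ℝ} {c : ℝ}
    (hf : f =O[l] k) (hg : Tendsto g l (𝓝 c)) : (fun x => f x * g x) =O[l] k := by
  simpa using hf.mul (hg.isBigO_one ℝ)

theorem sub_isBigO_pow_three_sub {α : Type*} {l : Filter α} {r a : α → ℝ} {c : ℝ}
    (hr : Tendsto r l (𝓝 c)) (ha : Tendsto a l (𝓝 c)) (hc : c ≠ 0) :
    (fun x => r x - a x) =O[l] (fun x => r x ^ 3 - a x ^ 3) := by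
  have hq : Tendsto (fun x => r x ^ 2 + r x * a x + a x ^ 2) l (𝓝 (3 * c ^ 2)) := by
    convert (hr.pow 2).add (hr.mul ha) |>.add (ha.pow 2) using 2; ring
  have hq0 : 3 * c ^ 2 ≠ 0 := by positivity
  refine ((isBigO_refl _ l).mul_of_tendsto (hq.inv₀ hq0)).congr' ?_ EventuallyEq.rfl
  filter_upwards [hq.eventually_ne hq0] with x hx
  rw [show r x ^ 3 - a x ^ 3 = (r x - a x) * (r x ^ 2 + r x * a x + a x ^ 2) by ring,
    mul_inv_cancel_right₀ hx]

theorem rpow_one_third_div_pow_six {x : ℝ} (hx : 0 ≤ x) (z : ℝ) :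
    (x / z ^ 6) ^ ((1 : ℝ) / 3) = x ^ ((1 : ℝ) / 3) / z ^ 2 := by
  have h : (1 : ℝ) / 3 = ((3 : ℕ) : ℝ)⁻¹ := by norm_num
  rw [Real.div_rpow hx (by positivity), show z ^ 6 = (z ^ 2) ^ 3 by ring, h,
    Real.pow_rpow_inv_natCast (by positivity) (by norm_num)]

theorem rpow_neg_five_thirds_div_pow_six {x : ℝ} (hx : 0 ≤ x) {z : ℝ} (hz : 0 ≤ z) :
    (x / z ^ 6) ^ (-(5 : ℝ) / 3) = x ^ (-(5 : ℝ) / 3) * z ^ 10 := by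
  rw [Real.div_rpow hx (by positivity), div_eq_mul_inv, ← Real.rpow_neg (by positivity),
    ← Real.rpow_natCast, ← Real.rpow_mul hz]
  norm_num

theorem rpow_one_third_pow_three {x : ℝ} (hx : 0 ≤ x) : (x ^ ((1 : ℝ) / 3)) ^ 3 = x := by
  simpa using Real.rpow_inv_natCast_pow hx (n := 3) (by norm_num)

noncomputable def pearceyTime (u z : ℝ) : ℝ :=
  1 / (3 * z ^ 6) + 2 * u / z ^ 2 + 2 * u ^ 2 * z ^ 2

def pearceyWeight (u z : ℝ) : ℝ := 1 + 6 * u * z ^ 4 + 6 * u ^ 2 * z ^ 8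

def pearceyWeightCbrtApprox (u z : ℝ) : ℝ := 1 + 2 * u * z ^ 4 - 2 * u ^ 2 * z ^ 8

theorem three_mul_pearceyTime (u : ℝ) {z : ℝ} (hz : z ≠ 0) :
    3 * pearceyTime u z = pearceyWeight u z / z ^ 6 := by
  unfold pearceyTime pearceyWeight
  field_simp
  ring

theorem pearceyTime_sub_div {u₁ u₂ : ℝ} (h : u₁ ≠ u₂) {z : ℝ} (hz : z ≠ 0) :
    (pearceyTime u₂ z - pearceyTime u₁ z) / (2 * (u₂ - u₁)) = (1 + (u₁ + u₂) * z ^ 4) / z ^ 2 := by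
  have : u₂ - u₁ ≠ 0 := sub_ne_zero.mpr h.symm
  unfold pearceyTime
  field_simp
  ring

theorem tendsto_pearceyWeight (u : ℝ) : Tendsto (pearceyWeight u) (𝓝 0) (𝓝 1) :=
  Continuous.tendsto' (by unfold pearceyWeight; fun_prop) _ _ (by simp [pearceyWeight])

theorem tendsto_pearceyWeight_rpow_one_third (u : ℝ) :
    Tendsto (fun z => pearceyWeight u z ^ ((1 : ℝ) / 3)) (𝓝 0) (𝓝 1) := by
  simpa using (tendsto_pearceyWeight u).rpow_const (p := 1 / 3) (Or.inl one_ne_zero)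

theorem tendsto_pearceyWeightCbrtApprox (u : ℝ) :
    Tendsto (pearceyWeightCbrtApprox u) (𝓝 0) (𝓝 1) :=
  Continuous.tendsto' (by unfold pearceyWeightCbrtApprox; fun_prop) _ _
    (by simp [pearceyWeightCbrtApprox])

theorem pearceyWeight_rpow_one_third_sub_isBigO (u : ℝ) :
    (fun z => pearceyWeight u z ^ ((1 : ℝ) / 3) - pearceyWeightCbrtApprox u z)
      =O[𝓝 0] (fun z => z ^ 12) := by
  refine (sub_isBigO_pow_three_sub (tendsto_pearceyWeight_rpow_one_third u)
    (tendsto_pearceyWeightCbrtApprox u) one_ne_zero).trans ?_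
  have hQ : Tendsto (fun z : ℝ => 16 * u ^ 3 + 12 * u ^ 4 * z ^ 4 - 24 * u ^ 5 * z ^ 8
      + 8 * u ^ 6 * z ^ 12) (𝓝 0) (𝓝 (16 * u ^ 3)) :=
    Continuous.tendsto' (by fun_prop) _ _ (by simp)
  refine ((isBigO_refl _ (𝓝 0)).mul_of_tendsto hQ).congr' ?_ EventuallyEq.rfl
  filter_upwards [(tendsto_pearceyWeight u).eventually_const_lt zero_lt_one] with z hz
  rw [rpow_one_third_pow_three hz.le, pearceyWeight, pearceyWeightCbrtApprox]
  ring

theorem pow_ten_isBigO_pearceyTime_rpow (u : ℝ) :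
    (fun z : ℝ => z ^ 10) =O[𝓝[>] 0] (fun z => pearceyTime u z ^ (-(5 : ℝ) / 3)) := by
  have hw : Tendsto (pearceyWeight u) (𝓝[>] 0) (𝓝 1) :=
    (tendsto_pearceyWeight u).mono_left nhdsWithin_le_nhds
  refine ((isBigO_refl _ _).mul_of_tendsto
    ((hw.div_const 3).rpow_const (p := (5 : ℝ) / 3) (by norm_num))).congr' ?_ EventuallyEq.rfl
  filter_upwards [self_mem_nhdsWithin, hw.eventually_const_lt one_pos] with z (hz : 0 < z) hwz
  have hτ : pearceyTime u z = pearceyWeight u z / 3 / z ^ 6 := by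
    rw [div_right_comm, ← three_mul_pearceyTime u hz.ne', mul_div_cancel_left₀ _ three_ne_zero]
  have hx : 0 < pearceyWeight u z / 3 := by positivity
  rw [hτ, rpow_neg_five_thirds_div_pow_six hx.le hz.le, mul_right_comm, ← Real.rpow_add hx]
  norm_num

theorem calibrationError_eq (u₁ u₂ : ℝ) {z r : ℝ} (hz : z ≠ 0) (hr0 : r ≠ 0)
    (hr : r ^ 3 = pearceyWeight u₁ z) :
    (1 + (u₁ + u₂) * z ^ 4) / z ^ 2 - r / z ^ 2 - (u₂ - u₁) / (r / z ^ 2)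
        - 2 * u₁ * u₂ / (pearceyWeight u₁ z / z ^ 6)
      = (z ^ 12 * (6 * u₁ ^ 3 + 6 * u₁ ^ 2 * u₂ + (4 * u₁ ^ 4 + 8 * u₁ ^ 3 * u₂) * z ^ 4
            + (4 * u₁ ^ 5 - 4 * u₁ ^ 4 * u₂) * z ^ 8)
          - (r - pearceyWeightCbrtApprox u₁ z)
            * (r ^ 3 + (u₂ - u₁) * z ^ 4 * (pearceyWeightCbrtApprox u₁ z + r)))
        * (r ^ 3)⁻¹ * (z ^ 2)⁻¹ := by
  rw [← hr]
  field_simp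
  unfold pearceyWeight at hr
  unfold pearceyWeightCbrtApprox
  linear_combination ((u₂ - u₁) * z ^ 4 + 2 * u₁ ^ 2 * z ^ 8) * hr

theorem calibrationError_isBigO {u₁ u₂ : ℝ} (h : u₁ ≠ u₂) :
    (fun z : ℝ => (pearceyTime u₂ z - pearceyTime u₁ z) / (2 * (u₂ - u₁))
        - (3 * pearceyTime u₁ z) ^ ((1 : ℝ) / 3)
        - (u₂ - u₁) / (3 * pearceyTime u₁ z) ^ ((1 : ℝ) / 3)
        - 2 * u₁ * u₂ / (3 * pearceyTime u₁ z))
      =O[𝓝[>] 0] (fun z : ℝ => z ^ 10) := by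
  set r := fun z => pearceyWeight u₁ z ^ ((1 : ℝ) / 3)
  set a := pearceyWeightCbrtApprox u₁
  have hr : Tendsto r (𝓝 0) (𝓝 1) := tendsto_pearceyWeight_rpow_one_third u₁
  have hQ : Tendsto (fun z : ℝ => 6 * u₁ ^ 3 + 6 * u₁ ^ 2 * u₂
      + (4 * u₁ ^ 4 + 8 * u₁ ^ 3 * u₂) * z ^ 4 + (4 * u₁ ^ 5 - 4 * u₁ ^ 4 * u₂) * z ^ 8)
      (𝓝 0) (𝓝 (6 * u₁ ^ 3 + 6 * u₁ ^ 2 * u₂)) :=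
    Continuous.tendsto' (by fun_prop) _ _ (by simp)
  have hB : Tendsto (fun z => r z ^ 3 + (u₂ - u₁) * z ^ 4 * (a z + r z)) (𝓝 0) (𝓝 1) := by
    simpa using (hr.pow 3).add ((tendsto_id.pow 4).const_mul (u₂ - u₁) |>.mul
      ((tendsto_pearceyWeightCbrtApprox u₁).add hr))
  have hnum := ((isBigO_refl _ (𝓝 0)).mul_of_tendsto hQ).sub
    ((pearceyWeight_rpow_one_third_sub_isBigO u₁).mul_of_tendsto hB)
  have hmain := ((hnum.mul_of_tendsto ((hr.pow 3).inv₀ (by norm_num))).mono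
    nhdsWithin_le_nhds).mul (isBigO_refl (fun z : ℝ => (z ^ 2)⁻¹) (𝓝[>] 0))
  refine hmain.congr' ?_ ?_
  · filter_upwards [self_mem_nhdsWithin, ((tendsto_pearceyWeight u₁).eventually_const_lt
      zero_lt_one).filter_mono nhdsWithin_le_nhds] with z (hz : 0 < z) hw
    rw [pearceyTime_sub_div h hz.ne', three_mul_pearceyTime u₁ hz.ne',
      rpow_one_third_div_pow_six hw.le, calibrationError_eq u₁ u₂ hz.ne' (by positivity)
        (rpow_one_third_pow_three hw.le)]
  · filter_upwards [self_mem_nhdsWithin] with z (hz : 0 < z)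
    field_simp

/-- time-calibration relation
`(τ₂−τ₁)/(2(u₂−u₁)) = (3τ₁)^{1/3} + (u₂−u₁)/(3τ₁)^{1/3} + 2u₁u₂/(3τ₁) + O(z¹⁰)`
as `z → 0⁺`, where `τᵢ(z) = 1/(3z⁶) + 2uᵢ/z² + 2uᵢ²z²`; equivalently the
difference is `O(τ₁^{−5/3})`. -/
theorem pearcey_time_calibration
    (u₁ u₂ : ℝ) (h : u₁ < u₂)
    (τ₁ τ₂ : ℝ → ℝ)
    (hτ₁ : ∀ z : ℝ, τ₁ z = 1 / (3 * z ^ 6) + 2 * u₁ / z ^ 2 + 2 * u₁ ^ 2 * z ^ 2)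
    (hτ₂ : ∀ z : ℝ, τ₂ z = 1 / (3 * z ^ 6) + 2 * u₂ / z ^ 2 + 2 * u₂ ^ 2 * z ^ 2) :
    (fun z : ℝ =>
        (τ₂ z - τ₁ z) / (2 * (u₂ - u₁)) - (3 * τ₁ z) ^ ((1 : ℝ) / 3)
          - (u₂ - u₁) / (3 * τ₁ z) ^ ((1 : ℝ) / 3) - 2 * u₁ * u₂ / (3 * τ₁ z))
      =O[nhdsWithin (0 : ℝ) (Ioi 0)] (fun z : ℝ => z ^ 10)
    ∧
    (fun z : ℝ =>
        (τ₂ z - τ₁ z) / (2 * (u₂ - u₁)) - (3 * τ₁ z) ^ ((1 : ℝ) / 3)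
          - (u₂ - u₁) / (3 * τ₁ z) ^ ((1 : ℝ) / 3) - 2 * u₁ * u₂ / (3 * τ₁ z))
      =O[nhdsWithin (0 : ℝ) (Ioi 0)] (fun z : ℝ => (τ₁ z) ^ (-(5 : ℝ) / 3)) := by
  obtain rfl : τ₁ = pearceyTime u₁ := funext hτ₁
  obtain rfl : τ₂ = pearceyTime u₂ := funext hτ₂
  have herror := calibrationError_isBigO h.ne
  exact ⟨herror, herror.trans (pow_ten_isBigO_pearceyTime_rpow u₁)⟩
end
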